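/- arXiv:1811.11113 — 12 statements merged into one kernel-verified Lean document; each statement's English description precedes it below -/
import Mathlib

section
/- If F : X × X → X is associative and quasitrivial (F(x,y) ∈ {x,y} for all x,y), then the binary relation ≾ on X defined by x ≾ y iff F(x,y) = y or F(y,x) = y is total and transitive (i.e., a weak ordering). -/
def Assoc {X : Type*} (F : X → X → X) : Prop :=
  ∀ x y z, F (F x y) z = F x (F y z)

def Quasitrivial {X : Type*} (F : X → X → X) : Prop :=
  ∀ x y, F x y = x ∨ F x y = y

/-- The weak ordering associated with `F`: `x ≾_F y` iff `F x y = y` or `F y x = y`. -/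
def wle {X : Type*} (F : X → X → X) (x y : X) : Prop :=
  F x y = y ∨ F y x = y

theorem stmt_0 {X : Type*} [Nonempty X] (F : X → X → X)
    (hA : Assoc F) (hQ : Quasitrivial F) :
    (∀ x y : X, wle F x y ∨ wle F y x) ∧ Transitive (wle F) := by
  constructor
  · intro x y
    rcases hQ x y with h | h
    · exact Or.inr (Or.inr h)
    · exact Or.inl (Or.inl h)
  · intro x y z hxy hyz
    rcases hQ x z with h1 | h1
    · rcases hQ z x with h2 | h2
      · exact Or.inr h2
      · rcases hxy with ha | ha <;> rcases hyz with hb | hb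
        · have h := hA x y z
          rw [ha, hb, h1] at h
          exact Or.inl (h1.trans h.symm)
        · have h := hA z x y
          rw [h2, ha, hb] at h
          rw [h] at ha
          exact Or.inl ha
        · have h := hA y x z
          rw [ha, hb, h1, ha] at h
          rw [← h] at ha
          exact Or.inr ha
        · have h := hA z y x
          rw [hb, h2, ha, hb] at h
          exact Or.inl (h1.trans h)
    · exact Or.inl h1
end

section
/- Let F : Xₙ × Xₙ → Xₙ be associative and quasitrivial on a finite set Xₙ of size n, and let ≾_F be the weak ordering defined by x ≾_F y iff F(x,y) = y or F(y,x) = y. Then for all x,y ∈ Xₙ, x ≾_F y if and only if |F⁻¹[x]| ≤ |F⁻¹[y]|, where F⁻¹[z] = {(a,b) ∈ Xₙ² : F(a,b) = z}. -/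
/-- The cardinality of the preimage `F⁻¹[z] = {(a,b) : F a b = z}`. -/
noncomputable def fiberCard {n : ℕ} (F : Fin n → Fin n → Fin n) (z : Fin n) : ℕ :=
  Nat.card {p : Fin n × Fin n // F p.1 p.2 = z}

section Aux

open Finset

variable {n : ℕ} (F : Fin n → Fin n → Fin n)

lemma wle_refl (hQ : Quasitrivial F) (x : Fin n) : wle F x x := by
  rcases hQ x x with h | h <;> exact Or.inl h

lemma wle_total (hQ : Quasitrivial F) (x y : Fin n) : wle F x y ∨ wle F y x := by
  rcases hQ x y with h | h
  · exact Or.inr (Or.inr h)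
  · exact Or.inl (Or.inl h)

lemma wle_trans (hA : Assoc F) (hQ : Quasitrivial F) {x y z : Fin n}
    (h1 : wle F x y) (h2 : wle F y z) : wle F x z := by
  rcases h1 with h1 | h1 <;> rcases h2 with h2 | h2
  · -- F x y = y, F y z = z
    have h := hA x y z
    rw [h1, h2] at h
    exact Or.inl h.symm
  · -- F x y = y, F z y = z
    have h := hA z x y
    rcases hQ z x with h3 | h3
    · exact Or.inr h3
    · rw [h3, h1, h2] at h
      -- h : y = z
      subst h
      exact Or.inl h1
  · -- F y x = y, F y z = z
    have h := hA y x z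
    rcases hQ x z with h3 | h3
    · rw [h1, h3, h1, h2] at h
      -- h : z = y
      rw [h]
      exact Or.inr h1
    · exact Or.inl h3
  · -- F y x = y, F z y = z
    have h := hA z y x
    rw [h1, h2] at h
    -- h : F z x = z
    exact Or.inr h

open Classical in
noncomputable def Bset (z : Fin n) : Finset (Fin n) :=
  univ.filter (fun w => wle F w z)

open Classical in
noncomputable def Dset (z : Fin n) : Finset (Fin n) :=
  univ.filter (fun w => ¬ wle F z w)

lemma deg_eq (hQ : Quasitrivial F) (z : Fin n) :
    fiberCard F z = (Dset F z).card + (Bset F z).card := by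
  classical
  have hzz : F z z = z := by rcases hQ z z with h | h <;> exact h
  -- Step 1: fiberCard F z + 1 = R.card + C.card
  have step1 : fiberCard F z + 1 =
      (univ.filter (fun b => F z b = z)).card +
      (univ.filter (fun a => F a z = z)).card := by
    have hfc : fiberCard F z =
        (univ.filter (fun p : Fin n × Fin n => F p.1 p.2 = z)).card := by
      rw [fiberCard, Nat.card_eq_fintype_card, Fintype.card_subtype]
    have hset : (univ.filter (fun p : Fin n × Fin n => F p.1 p.2 = z))
        = ({z} ×ˢ (univ.filter (fun b => F z b = z))) ∪
          ((univ.filter (fun a => F a z = z)) ×ˢ {z}) := by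
      ext ⟨a, b⟩
      simp only [mem_filter, mem_univ, true_and, mem_union, mem_product,
        mem_singleton]
      constructor
      · intro h
        rcases hQ a b with e | e
        · have ha : a = z := by rw [← h, e]
          subst ha
          exact Or.inl ⟨rfl, h⟩
        · have hb : b = z := by rw [← h, e]
          subst hb
          exact Or.inr ⟨h, rfl⟩
      · rintro (⟨ha, hb⟩ | ⟨ha, hb⟩)
        · rw [ha]; exact hb
        · rw [hb]; exact ha
    have hinter : ((({z} : Finset (Fin n)) ×ˢ (univ.filter (fun b => F z b = z))) ∩
          ((univ.filter (fun a => F a z = z)) ×ˢ {z})) = {(z, z)} := by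
      ext ⟨a, b⟩
      simp only [mem_inter, mem_product, mem_singleton, mem_filter, mem_univ,
        true_and, Prod.mk.injEq]
      constructor
      · rintro ⟨⟨ha, _⟩, _, hb⟩
        exact ⟨ha, hb⟩
      · rintro ⟨ha, hb⟩
        subst ha; subst hb
        exact ⟨⟨rfl, hzz⟩, hzz, rfl⟩
    have hu := Finset.card_union_add_card_inter
      (({z} : Finset (Fin n)) ×ˢ (univ.filter (fun b => F z b = z)))
      ((univ.filter (fun a => F a z = z)) ×ˢ {z})
    rw [hinter] at hu
    rw [hfc, hset]
    simp only [Finset.card_singleton, Finset.card_product, one_mul, mul_one] at hu ⊢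
    omega
  -- Step 2
  have key : ∀ w : Fin n,
      ((if F z w = z then 1 else 0) + if F w z = z then 1 else 0 : ℕ)
      = ((if ¬ wle F z w then 1 else 0) + (if wle F w z then 1 else 0)
          + if w = z then 1 else 0) := by
    intro w
    by_cases hw : w = z
    · subst hw
      simp [wle, hzz]
    · have hw' : ¬ z = w := fun h => hw h.symm
      rcases hQ z w with e1 | e1 <;> rcases hQ w z with e2 | e2 <;>
        simp [wle, e1, e2, hw, hw']
  have step2 : (univ.filter (fun b => F z b = z)).card +
      (univ.filter (fun a => F a z = z)).card
      = (Dset F z).card + (Bset F z).card + 1 := by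
    have hsum := Finset.sum_congr rfl (fun w (_ : w ∈ (univ : Finset (Fin n))) => key w)
    rw [Finset.sum_add_distrib, Finset.sum_add_distrib, Finset.sum_add_distrib] at hsum
    have hone : (∑ w : Fin n, if w = z then (1:ℕ) else 0) = 1 := by
      simp [Finset.sum_ite_eq' univ z (fun _ => (1:ℕ))]
    rw [hone] at hsum
    rw [Dset, Bset, Finset.card_filter, Finset.card_filter,
      Finset.card_filter, Finset.card_filter]
    exact hsum
  omega

end Aux

theorem stmt_2 {n : ℕ} (F : Fin n → Fin n → Fin n)
    (hA : Assoc F) (hQ : Quasitrivial F) :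
    ∀ x y : Fin n, wle F x y ↔ fiberCard F x ≤ fiberCard F y := by
  classical
  have strict : ∀ x y : Fin n, wle F x y → ¬ wle F y x →
      fiberCard F x < fiberCard F y := by
    intro x y h h'
    rw [deg_eq F hQ, deg_eq F hQ]
    have hDB : Dset F x ⊆ Bset F x := by
      intro w hw
      simp only [Dset, Bset, Finset.mem_filter, Finset.mem_univ, true_and] at hw ⊢
      exact (wle_total F hQ x w).resolve_left hw
    have hxB : x ∈ Bset F x := by
      simp only [Bset, Finset.mem_filter, Finset.mem_univ, true_and]
      exact wle_refl F hQ x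
    have hxD : x ∉ Dset F x := by
      simp only [Dset, Finset.mem_filter, Finset.mem_univ, true_and, not_not]
      exact wle_refl F hQ x
    have h1 : (Dset F x).card < (Bset F x).card :=
      Finset.card_lt_card ⟨hDB, fun hs => hxD (hs hxB)⟩
    have hBD : Bset F x ⊆ Dset F y := by
      intro w hw
      simp only [Dset, Bset, Finset.mem_filter, Finset.mem_univ, true_and] at hw ⊢
      intro hyw
      exact h' (wle_trans F hA hQ hyw hw)
    have h2 : (Bset F x).card ≤ (Dset F y).card := Finset.card_le_card hBD
    have hBB : Bset F x ⊆ Bset F y := by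
      intro w hw
      simp only [Bset, Finset.mem_filter, Finset.mem_univ, true_and] at hw ⊢
      exact wle_trans F hA hQ hw h
    have hyB : y ∈ Bset F y := by
      simp only [Bset, Finset.mem_filter, Finset.mem_univ, true_and]
      exact wle_refl F hQ y
    have hyBx : y ∉ Bset F x := by
      simp only [Bset, Finset.mem_filter, Finset.mem_univ, true_and]
      exact h'
    have h3 : (Bset F x).card < (Bset F y).card :=
      Finset.card_lt_card ⟨hBB, fun hs => hyBx (hs hyB)⟩
    omega
  have eqv : ∀ x y : Fin n, wle F x y → wle F y x →
      fiberCard F x = fiberCard F y := by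
    intro x y h h'
    rw [deg_eq F hQ, deg_eq F hQ]
    have hB : Bset F x = Bset F y := by
      ext w
      simp only [Bset, Finset.mem_filter, Finset.mem_univ, true_and]
      exact ⟨fun hw => wle_trans F hA hQ hw h, fun hw => wle_trans F hA hQ hw h'⟩
    have hD : Dset F x = Dset F y := by
      ext w
      simp only [Dset, Finset.mem_filter, Finset.mem_univ, true_and]
      exact ⟨fun hw hyw => hw (wle_trans F hA hQ h hyw),
             fun hw hxw => hw (wle_trans F hA hQ h' hxw)⟩
    rw [hB, hD]
  intro x y
  constructor
  · intro h
    by_cases h' : wle F y x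
    · exact le_of_eq (eqv x y h h')
    · exact le_of_lt (strict x y h h')
  · intro h
    by_contra hnot
    have h' : wle F y x := (wle_total F hQ x y).resolve_left hnot
    exact absurd h (not_le.mpr (strict y x h' hnot))
end

section
/- Let F : Xₙ × Xₙ → Xₙ be associative and quasitrivial. Then for every x ∈ Xₙ, |F⁻¹[x]| = 2·|{z ∈ Xₙ : z ≺_F x}| + |{z ∈ Xₙ : z ∼_F x}|, where ≾_F is the weak ordering associated with F, ≺_F its strict part, and ∼_F its symmetric part. -/
/-- Symmetric part of `≾_F`. -/
def simF {X : Type*} (F : X → X → X) (x y : X) : Prop :=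
  wle F x y ∧ wle F y x

/-- Strict (asymmetric) part of `≾_F`. -/
def sltF {X : Type*} (F : X → X → X) (x y : X) : Prop :=
  wle F x y ∧ ¬ wle F y x

theorem stmt_3 {n : ℕ} (F : Fin n → Fin n → Fin n)
    (hA : Assoc F) (hQ : Quasitrivial F) :
    ∀ x : Fin n,
      fiberCard F x =
        2 * Nat.card {z : Fin n // sltF F z x} + Nat.card {z : Fin n // simF F z x} := by
  classical
  intro x
  have hxx : F x x = x := by rcases hQ x x with h | h <;> exact h
  -- convert Nat.card to Finset cards
  have hfib : fiberCard F x
      = (Finset.univ.filter (fun p : Fin n × Fin n => F p.1 p.2 = x)).card := by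
    rw [fiberCard, Nat.card_eq_fintype_card, Fintype.card_subtype]
  have hslt : Nat.card {z : Fin n // sltF F z x}
      = (Finset.univ.filter (fun z : Fin n => sltF F z x)).card := by
    rw [Nat.card_eq_fintype_card, Fintype.card_subtype]
  have hsim : Nat.card {z : Fin n // simF F z x}
      = (Finset.univ.filter (fun z : Fin n => simF F z x)).card := by
    rw [Nat.card_eq_fintype_card, Fintype.card_subtype]
  set T1 : Finset (Fin n) := Finset.univ.filter (fun a => F a x = x) with hT1
  set T2 : Finset (Fin n) := Finset.univ.filter (fun b => F x b = x) with hT2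
  -- key pointwise identity
  have key : ∀ a : Fin n,
      ((if F a x = x then 1 else 0) + (if F x a = x then 1 else 0) : ℕ)
      = (if sltF F a x then 2 else 0) + (if simF F a x then 1 else 0)
        + (if a = x then 1 else 0) := by
    intro a
    by_cases hax : a = x
    · subst hax
      have hsl : ¬ sltF F a a := by
        intro h; exact h.2 h.1
      have hsm : simF F a a := ⟨Or.inl hxx, Or.inl hxx⟩
      simp [hxx, hsl, hsm]
    · rcases hQ a x with ha | ha <;> rcases hQ x a with hb | hb
      · -- F a x = a, F x a = x : symmetric case
        have hsm : simF F a x := ⟨Or.inr hb, Or.inr ha⟩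
        have hsl : ¬ sltF F a x := fun h => h.2 hsm.2
        have h1 : ¬ F a x = x := by rw [ha]; exact hax
        simp [h1, hb, hsl, hsm, hax]
      · -- F a x = a, F x a = a
        have hw1 : ¬ wle F a x := by
          rintro (h | h)
          · exact hax (ha ▸ h)
          · exact hax (hb ▸ h)
        have hsl : ¬ sltF F a x := fun h => hw1 h.1
        have hsm : ¬ simF F a x := fun h => hw1 h.1
        have h1 : ¬ F a x = x := by rw [ha]; exact hax
        have h2 : ¬ F x a = x := by rw [hb]; exact hax
        simp [h1, h2, hsl, hsm, hax]
      · -- F a x = x, F x a = x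
        have hw2 : ¬ wle F x a := by
          rintro (h | h)
          · exact hax (hb ▸ h).symm
          · exact hax (ha ▸ h).symm
        have hsl : sltF F a x := ⟨Or.inl ha, hw2⟩
        have hsm : ¬ simF F a x := fun h => hw2 h.2
        simp [ha, hb, hsl, hsm, hax]
      · -- F a x = x, F x a = a
        have hsm : simF F a x := ⟨Or.inl ha, Or.inl hb⟩
        have hsl : ¬ sltF F a x := fun h => h.2 hsm.2
        have h2 : ¬ F x a = x := by rw [hb]; exact hax
        simp [ha, h2, hsl, hsm, hax]
  -- sum of the two filter cards
  have hsum : T1.card + T2.card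
      = 2 * (Finset.univ.filter (fun z : Fin n => sltF F z x)).card
        + (Finset.univ.filter (fun z : Fin n => simF F z x)).card + 1 := by
    rw [hT1, hT2, Finset.card_filter, Finset.card_filter, ← Finset.sum_add_distrib]
    have := Finset.sum_congr rfl (fun a (_ : a ∈ (Finset.univ : Finset (Fin n))) => key a)
    rw [this, Finset.sum_add_distrib, Finset.sum_add_distrib,
      Finset.card_filter, Finset.card_filter, Finset.mul_sum]
    congr 1
    · congr 1
      exact Finset.sum_congr rfl (fun a _ => by split <;> simp
        )
    · simp
  -- fiber decomposition
  have hdecomp : Finset.univ.filter (fun p : Fin n × Fin n => F p.1 p.2 = x)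
      = T1.image (fun a => (a, x)) ∪ T2.image (fun b => (x, b)) := by
    ext ⟨a, b⟩
    simp only [Finset.mem_filter, Finset.mem_univ, true_and, Finset.mem_union,
      Finset.mem_image, hT1, hT2, Prod.mk.injEq]
    constructor
    · intro h
      rcases hQ a b with hab | hab
      · have hax2 : a = x := hab.symm.trans h
        right
        exact ⟨b, hax2 ▸ h, hax2.symm, rfl⟩
      · have hbx : b = x := hab.symm.trans h
        left
        exact ⟨a, hbx ▸ h, rfl, hbx.symm⟩
    · rintro (⟨c, hc, h1, h2⟩ | ⟨c, hc, h1, h2⟩) <;> rw [← h1, ← h2] <;> exact hc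
  have hinter : (T1.image (fun a => (a, x))) ∩ (T2.image (fun b => (x, b)))
      = {(x, x)} := by
    apply Finset.Subset.antisymm
    · intro p hp
      simp only [Finset.mem_inter, Finset.mem_image, hT1, hT2,
        Finset.mem_filter, Finset.mem_univ, true_and] at hp
      obtain ⟨⟨c, hc, h1⟩, d, hd, h2⟩ := hp
      have e1 : p.2 = x := by rw [← h1]
      have e2 : p.1 = x := by rw [← h2]
      simp only [Finset.mem_singleton]
      exact Prod.ext_iff.mpr ⟨e2, e1⟩
    · intro p hp
      simp only [Finset.mem_singleton] at hp
      subst hp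
      simp only [Finset.mem_inter, Finset.mem_image, hT1, hT2,
        Finset.mem_filter, Finset.mem_univ, true_and]
      exact ⟨⟨x, hxx, rfl⟩, x, hxx, rfl⟩
  have hinj1 : (T1.image (fun a => (a, x))).card = T1.card :=
    Finset.card_image_of_injective _ (fun a b h => (Prod.mk.injEq .. ▸ h).1)
  have hinj2 : (T2.image (fun b => (x, b))).card = T2.card :=
    Finset.card_image_of_injective _ (fun a b h => (Prod.mk.injEq .. ▸ h).2)
  have hcu := Finset.card_union_add_card_inter (T1.image (fun a => (a, x)))
    (T2.image (fun b => (x, b)))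
  rw [hinter, hinj1, hinj2, Finset.card_singleton] at hcu
  rw [hfib, hdecomp, hslt, hsim]
  omega
end

section
/- Let F : X × X → X be associative and quasitrivial and let σ be a permutation of X. If σ(x) ∼_F x for all x ∈ X (where ∼_F is the symmetric part of the weak ordering ≾_F associated with F), then the σ-conjugate F_σ equals F, where F_σ(x,y) = σ(F(σ⁻¹(x), σ⁻¹(y))). -/
/-- The σ-conjugate of `F`. -/
def conjOp {X : Type*} (σ : Equiv.Perm X) (F : X → X → X) : X → X → X :=
  fun x y => σ (F (σ.symm x) (σ.symm y))

section Aux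

variable {X : Type*} {F : X → X → X}

lemma my_idem (hQ : Quasitrivial F) (x : X) : F x x = x := (hQ x x).elim id id

lemma my_total (hQ : Quasitrivial F) (x y : X) : wle F x y ∨ wle F y x := by
  rcases hQ x y with h | h
  · exact Or.inr (Or.inr h)
  · exact Or.inl (Or.inl h)

lemma my_trans (hA : Assoc F) (hQ : Quasitrivial F) {x y z : X}
    (h1 : wle F x y) (h2 : wle F y z) : wle F x z := by
  rcases h1 with h1 | h1 <;> rcases h2 with h2 | h2
  · left
    calc F x z = F x (F y z) := by rw [h2]
    _ = F (F x y) z := (hA x y z).symm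
    _ = F y z := by rw [h1]
    _ = z := h2
  · have key := hA z x y
    rw [h1, h2] at key
    rcases hQ z x with hz | hz
    · exact Or.inr hz
    · rw [hz, h1] at key
      subst key
      exact Or.inl h1
  · have key := hA y x z
    rw [h1, h2] at key
    rcases hQ x z with hx | hx
    · rw [hx, h1] at key
      subst key
      exact Or.inr h1
    · exact Or.inl hx
  · have key := hA z y x
    rw [h2, h1, h2] at key
    exact Or.inr key

lemma my_sim_symm {x y : X} (h : simF F x y) : simF F y x := ⟨h.2, h.1⟩

lemma my_sim_trans (hA : Assoc F) (hQ : Quasitrivial F) {x y z : X}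
    (h1 : simF F x y) (h2 : simF F y z) : simF F x z :=
  ⟨my_trans hA hQ h1.1 h2.1, my_trans hA hQ h2.2 h1.2⟩

lemma my_strict (hQ : Quasitrivial F) {x y : X}
    (h1 : wle F x y) (h2 : ¬ wle F y x) : F x y = y ∧ F y x = y := by
  have hxy : F x y ≠ x := fun e => h2 (Or.inr e)
  have hyx : F y x ≠ x := fun e => h2 (Or.inl e)
  constructor
  · rcases hQ x y with e | e
    · exact absurd e hxy
    · exact e
  · rcases hQ y x with e | e
    · exact e
    · exact absurd e hyx

lemma my_pair_char (hQ : Quasitrivial F) {x y : X}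
    (hs : simF F x y) (hne : x ≠ y) :
    (F x y = x ∧ F y x = y) ∨ (F x y = y ∧ F y x = x) := by
  obtain ⟨h1 | h1, h2 | h2⟩ := hs
  · exact Or.inr ⟨h1, h2⟩
  · exact absurd (h2.symm.trans h1) hne
  · exact absurd (h2.symm.trans h1) hne
  · exact Or.inl ⟨h2, h1⟩

/-- Orientation propagation (π1 case). -/
lemma my_L (hA : Assoc F) (hQ : Quasitrivial F) {x y z : X}
    (hxy : simF F x y) (hyz : simF F y z) (hxz : simF F x z)
    (nxy : x ≠ y) (nyz : y ≠ z) (h1 : F x y = x) : F y z = y := by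
  have hyx : F y x = y := by
    rcases my_pair_char hQ hxy nxy with ⟨_, e⟩ | ⟨e, _⟩
    · exact e
    · exact absurd (h1.symm.trans e) nxy
  rcases my_pair_char hQ hyz nyz with ⟨e, _⟩ | ⟨e2, e3⟩
  · exact e
  · by_cases hxzeq : x = z
    · subst hxzeq
      exact absurd (hyx.symm.trans e2) nyz
    · rcases my_pair_char hQ hxz hxzeq with ⟨f1, f2⟩ | ⟨f1, f2⟩
      · have key := hA y x z
        rw [hyx, f1, hyx] at key
        exact key
      · have key := hA y z x
        rw [e2, f2, hyx] at key
        exact absurd key nxy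

/-- Orientation propagation (π2 case). -/
lemma my_L' (hA : Assoc F) (hQ : Quasitrivial F) {x y z : X}
    (hxy : simF F x y) (hyz : simF F y z) (hxz : simF F x z)
    (nxy : x ≠ y) (nyz : y ≠ z) (h1 : F x y = y) : F y z = z := by
  have hyx : F y x = x := by
    rcases my_pair_char hQ hxy nxy with ⟨e, _⟩ | ⟨_, e⟩
    · exact absurd (e.symm.trans h1) nxy
    · exact e
  rcases my_pair_char hQ hyz nyz with ⟨e2, e3⟩ | ⟨e, _⟩
  · have := my_L hA hQ (my_sim_symm hyz) (my_sim_symm hxy) (my_sim_symm hxz)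
      (Ne.symm nyz) (Ne.symm nxy) e3
    exact absurd (hyx.symm.trans this) nxy
  · exact e

end Aux

theorem stmt_5 {X : Type*} (F : X → X → X) (σ : Equiv.Perm X)
    (hA : Assoc F) (hQ : Quasitrivial F)
    (h : ∀ x : X, simF F (σ x) x) :
    conjOp σ F = F := by
  have key : ∀ a b, F (σ a) (σ b) = σ (F a b) := by
    intro a b
    by_cases hab : a = b
    · subst hab
      rw [my_idem hQ, my_idem hQ]
    have hσab : σ a ≠ σ b := fun e => hab (σ.injective e)
    have ha := h a
    have hb := h b
    have saa : simF F a (σ a) := my_sim_symm ha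
    have sbb : simF F b (σ b) := my_sim_symm hb
    by_cases hs : simF F a b
    · have sba : simF F b a := my_sim_symm hs
      have s_b_σa : simF F b (σ a) := my_sim_trans hA hQ sba saa
      have s_a_σb : simF F a (σ b) := my_sim_trans hA hQ hs sbb
      have s_σa_σb : simF F (σ a) (σ b) := my_sim_trans hA hQ ha s_a_σb
      rcases my_pair_char hQ hs hab with ⟨h1, h2⟩ | ⟨h1, h2⟩
      · rw [h1]
        by_cases hba : b = σ a
        · have hbσb : b ≠ σ b := fun e => hσab (hba.symm.trans e)
          have := my_L hA hQ hs sbb s_a_σb hab hbσb h1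
          rw [← hba]
          exact this
        · have s1 : F b (σ a) = b := my_L hA hQ hs s_b_σa saa hab hba h1
          exact my_L hA hQ s_b_σa s_σa_σb sbb hba hσab s1
      · rw [h1]
        by_cases hba : b = σ a
        · have hbσb : b ≠ σ b := fun e => hσab (hba.symm.trans e)
          have := my_L' hA hQ hs sbb s_a_σb hab hbσb h1
          rw [← hba]
          exact this
        · have s1 : F b (σ a) = σ a := my_L' hA hQ hs s_b_σa saa hab hba h1
          exact my_L' hA hQ s_b_σa s_σa_σb sbb hba hσab s1
    · rcases my_total hQ a b with hwab | hwba
      · have hnba : ¬ wle F b a := fun hba => hs ⟨hwab, hba⟩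
        rw [(my_strict hQ hwab hnba).1]
        have hw : wle F (σ a) (σ b) :=
          my_trans hA hQ ha.1 (my_trans hA hQ hwab hb.2)
        have hn : ¬ wle F (σ b) (σ a) := fun hc =>
          hnba (my_trans hA hQ (my_trans hA hQ hb.2 hc) ha.1)
        exact (my_strict hQ hw hn).1
      · have hnab : ¬ wle F a b := fun hab' => hs ⟨hab', hwba⟩
        rw [(my_strict hQ hwba hnab).2]
        have hw : wle F (σ b) (σ a) :=
          my_trans hA hQ hb.1 (my_trans hA hQ hwba ha.2)
        have hn : ¬ wle F (σ a) (σ b) := fun hc =>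
          hnab (my_trans hA hQ (my_trans hA hQ ha.2 hc) hb.1)
        exact (my_strict hQ hw hn).2
  funext x y
  show σ (F (σ.symm x) (σ.symm y)) = F x y
  have := key (σ.symm x) (σ.symm y)
  rw [σ.apply_symm_apply, σ.apply_symm_apply] at this
  exact this.symm
end

section
/- Let r(n) be the number of orbits of associative quasitrivial operations on Xₙ under conjugation by the symmetric group, with r(0) = r(1) = 1. Then r(n+2) = 2r(n+1) + r(n) for all n ≥ 0, and r(n) = ½(1+√2)ⁿ + ½(1−√2)ⁿ = Σ_{k≥0} C(n,2k)·2ᵏ. -/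
/-- Two associative quasitrivial operations are in the same orbit if they are conjugate. -/
def orbitRel (n : ℕ) (F G : {F : Fin n → Fin n → Fin n // Assoc F ∧ Quasitrivial F}) : Prop :=
  ∃ σ : Equiv.Perm (Fin n), G.1 = conjOp σ F.1

set_option linter.unusedSectionVars false

namespace AQ


variable {α : Type*} [Fintype α] [DecidableEq α] {β : Type*} [Fintype β] [DecidableEq β]

def lo (F : α → α → α) (x y : α) : Prop := F x y = y ∨ F y x = y

instance (F : α → α → α) (x y : α) : Decidable (lo F x y) := by unfold lo; infer_instance

def hgt (F : α → α → α) (x : α) : ℕ :=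
  (Finset.univ.filter fun y => lo F y x ∧ ¬ lo F x y).card

def bP (F : α → α → α) (x : α) : Prop :=
  ∃ y, y ≠ x ∧ lo F x y ∧ lo F y x ∧ F x y = y

instance (F : α → α → α) (x : α) : Decidable (bP F x) := by unfold bP; infer_instance

def sig (F : α → α → α) : Finset (ℕ × Bool) :=
  Finset.univ.image fun x => (hgt F x, decide (bP F x))

variable {F : α → α → α}

lemma idem (hQ : Quasitrivial F) (x : α) : F x x = x := by
  rcases hQ x x with h | h <;> exact h

lemma lo_refl (hQ : Quasitrivial F) (x : α) : lo F x x := Or.inl (idem hQ x)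

lemma lo_total (hQ : Quasitrivial F) (x y : α) : lo F x y ∨ lo F y x := by
  rcases hQ x y with h | h
  · exact Or.inr (Or.inr h)
  · exact Or.inl (Or.inl h)

lemma lo_trans (hA : Assoc F) (hQ : Quasitrivial F) {x y z : α}
    (h1 : lo F x y) (h2 : lo F y z) : lo F x z := by
  rcases h1 with h1 | h1 <;> rcases h2 with h2 | h2
  · left
    calc F x z = F x (F y z) := by rw [h2]
      _ = F (F x y) z := (hA x y z).symm
      _ = F y z := by rw [h1]
      _ = z := h2
  · -- h1 : F x y = y, h2 : F z y = z
    rcases hQ x z with h3 | h3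
    · rcases hQ z x with h4 | h4
      · exact Or.inr h4
      · -- F x z = x, F z x = x
        have e1 : F (F z x) y = F z (F x y) := hA z x y
        rw [h4, h1, h2] at e1
        rw [← e1]
        exact Or.inl h1
    · exact Or.inl h3
  · -- h1 : F y x = y, h2 : F y z = z
    rcases hQ x z with h3 | h3
    · rcases hQ z x with h4 | h4
      · exact Or.inr h4
      · -- F x z = x, F z x = x
        have e1 : F (F y x) z = F y (F x z) := hA y x z
        rw [h1, h3, h1, h2] at e1
        rw [e1]
        exact Or.inr h1
    · exact Or.inl h3
  · -- h1 : F y x = y, h2 : F z y = z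
    rcases hQ x z with h3 | h3
    · rcases hQ z x with h4 | h4
      · exact Or.inr h4
      · -- F x z = x, F z x = x
        have e1 : F (F z y) x = F z (F y x) := hA z y x
        rw [h2, h4, h1, h2] at e1
        rw [← e1]
        exact lo_refl hQ x
    · exact Or.inl h3

lemma pair (hQ : Quasitrivial F) {x y : α} (hxy : x ≠ y) (h1 : lo F x y) (h2 : lo F y x) :
    (F x y = y ∧ F y x = x) ∨ (F x y = x ∧ F y x = y) := by
  rcases hQ x y with ha | ha
  · rcases h1 with h | h
    · exact absurd (ha.symm.trans h) hxy
    · exact Or.inr ⟨ha, h⟩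
  · rcases h2 with h | h
    · exact Or.inl ⟨ha, h⟩
    · exact absurd (h.symm.trans ha) hxy

lemma consis (hA : Assoc F) (hQ : Quasitrivial F) {x y z : α} (hxz : x ≠ z)
    (hxy : lo F x y) (hyx : lo F y x) (hxz' : lo F x z) (hzx : lo F z x)
    (h : F x z = z) : F x y = y := by
  by_cases hxy' : x = y
  · exact hxy' ▸ idem hQ x
  by_cases hyz : y = z
  · exact hyz ▸ h
  -- F z x = x
  have hzx' : F z x = x := by
    rcases pair hQ hxz hxz' hzx with ⟨_, h2⟩ | ⟨h1, _⟩
    · exact h2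
    · exact absurd (h1.symm.trans h) hxz
  by_contra hne
  have hFxy : F x y = x := (hQ x y).resolve_right hne
  have hFyx : F y x = y := by
    rcases pair hQ hxy' hxy hyx with ⟨h1, _⟩ | ⟨_, h2⟩
    · exact absurd h1 hne
    · exact h2
  rcases hQ z y with hzy | hzy
  · -- F z y = z : use F (F x y) z = F x (F y z) with F y z
    have hyzlo : lo F y z := lo_trans hA hQ hyx hxz'
    have hzylo : lo F z y := lo_trans hA hQ hzx hxy
    have hFyz : F y z = y := by
      rcases pair hQ hyz hyzlo hzylo with ⟨_, h1⟩ | ⟨h2, _⟩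
      · exact absurd (h1.symm.trans hzy) hyz
      · exact h2
    have e1 : F (F x y) z = F x (F y z) := hA x y z
    rw [hFxy, hFyz, h, hFxy] at e1
    exact hxz e1.symm
  · -- F z y = y
    have e1 : F (F x z) y = F x (F z y) := hA x z y
    rw [h, hzy, hFxy] at e1
    exact hxy' e1.symm

lemma hgt_mono (hA : Assoc F) (hQ : Quasitrivial F) {x y : α} (h : lo F x y) :
    hgt F x ≤ hgt F y := by
  apply Finset.card_le_card
  intro z hz
  simp only [Finset.mem_filter, Finset.mem_univ, true_and] at hz ⊢
  exact ⟨lo_trans hA hQ hz.1 h, fun hyz => hz.2 (lo_trans hA hQ h hyz)⟩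

lemma hgt_strict (hA : Assoc F) (hQ : Quasitrivial F) {x y : α}
    (h1 : lo F x y) (h2 : ¬ lo F y x) : hgt F x < hgt F y := by
  apply Finset.card_lt_card
  constructor
  · intro z hz
    simp only [Finset.mem_filter, Finset.mem_univ, true_and] at hz ⊢
    exact ⟨lo_trans hA hQ hz.1 h1, fun hyz => h2 (lo_trans hA hQ hyz hz.1)⟩
  · intro hsub
    have hx : x ∈ Finset.univ.filter fun z => lo F z y ∧ ¬ lo F y z := by
      simp [h1, h2]
    have := hsub hx
    simp at this

lemma lt_of_hgt_lt (hA : Assoc F) (hQ : Quasitrivial F) {x y : α}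
    (h : hgt F x < hgt F y) : lo F x y ∧ ¬ lo F y x := by
  have h2 : ¬ lo F y x := fun hl => absurd (hgt_mono hA hQ hl) (by omega)
  exact ⟨(lo_total hQ x y).resolve_right h2, h2⟩

lemma lo_lo_of_hgt_eq (hA : Assoc F) (hQ : Quasitrivial F) {x y : α}
    (h : hgt F x = hgt F y) : lo F x y ∧ lo F y x := by
  constructor
  · by_contra h'
    have := hgt_strict hA hQ ((lo_total hQ x y).resolve_left h') h'
    omega
  · by_contra h'
    have := hgt_strict hA hQ ((lo_total hQ y x).resolve_left h') h'
    omega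

lemma hgt_eq_of_lo_lo (hA : Assoc F) (hQ : Quasitrivial F) {x y : α}
    (h1 : lo F x y) (h2 : lo F y x) : hgt F x = hgt F y :=
  le_antisymm (hgt_mono hA hQ h1) (hgt_mono hA hQ h2)

lemma F_eq_of_hgt_lt (hA : Assoc F) (hQ : Quasitrivial F) {x y : α}
    (h : hgt F x < hgt F y) : F x y = y ∧ F y x = y := by
  obtain ⟨_, h2⟩ := lt_of_hgt_lt hA hQ h
  constructor
  · rcases hQ x y with h3 | h3
    · exact absurd (Or.inr h3) h2
    · exact h3
  · rcases hQ y x with h3 | h3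
    · exact h3
    · exact absurd (Or.inl h3) h2

lemma bP_congr (hA : Assoc F) (hQ : Quasitrivial F) {x y : α}
    (h : hgt F x = hgt F y) : bP F x ↔ bP F y := by
  suffices H : ∀ a b : α, hgt F a = hgt F b → bP F a → bP F b by
    exact ⟨H x y h, H y x h.symm⟩
  rintro a b hab ⟨w, hwne, haw, hwa, hFaw⟩
  by_cases hab' : a = b
  · exact hab' ▸ ⟨w, hwne, haw, hwa, hFaw⟩
  obtain ⟨hl1, hl2⟩ := lo_lo_of_hgt_eq hA hQ hab
  have hFab : F a b = b := consis hA hQ (Ne.symm hwne) hl1 hl2 haw hwa hFaw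
  have hFba : F b a = a := by
    rcases pair hQ hab' hl1 hl2 with ⟨_, h2⟩ | ⟨h1, _⟩
    · exact h2
    · exact absurd (h1.symm.trans hFab) hab'
  exact ⟨a, hab', hl2, hl1, hFba⟩

lemma recon (hA : Assoc F) (hQ : Quasitrivial F) (x y : α) :
    F x y = if hgt F x < hgt F y then y else if hgt F y < hgt F x then x
      else if bP F x then y else x := by
  split_ifs with h1 h2 h3
  · exact (F_eq_of_hgt_lt hA hQ h1).1
  · exact (F_eq_of_hgt_lt hA hQ h2).2
  · by_cases hxy : x = y
    · exact hxy ▸ idem hQ x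
    have heq : hgt F x = hgt F y := by omega
    obtain ⟨hl1, hl2⟩ := lo_lo_of_hgt_eq hA hQ heq
    obtain ⟨w, hwne, hxw, hwx, hFxw⟩ := h3
    exact consis hA hQ (Ne.symm hwne) hl1 hl2 hxw hwx hFxw
  · by_cases hxy : x = y
    · exact hxy ▸ idem hQ x
    have heq : hgt F x = hgt F y := by omega
    obtain ⟨hl1, hl2⟩ := lo_lo_of_hgt_eq hA hQ heq
    rcases hQ x y with h | h
    · exact h
    · exact absurd ⟨y, Ne.symm hxy, hl1, hl2, h⟩ h3

lemma ext_of_hgt_bP {G : α → α → α} (hA : Assoc F) (hQ : Quasitrivial F)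
    (hA' : Assoc G) (hQ' : Quasitrivial G)
    (hh : ∀ x, hgt F x = hgt G x) (hb : ∀ x, bP F x ↔ bP G x) : F = G := by
  funext x y
  rw [recon hA hQ x y, recon hA' hQ' x y, hh x, hh y]
  by_cases h : bP F x
  · rw [if_pos h, if_pos ((hb x).mp h)]
  · rw [if_neg h, if_neg (fun h' => h ((hb x).mpr h'))]

section MapOp

variable {β : Type*} [Fintype β] [DecidableEq β]

def mapOp (e : α ≃ β) (F : α → α → α) : β → β → β :=
  fun x y => e (F (e.symm x) (e.symm y))

lemma mapOp_assoc (e : α ≃ β) (hA : Assoc F) : Assoc (mapOp e F) := by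
  intro x y z
  simp only [mapOp, Equiv.symm_apply_apply]
  rw [hA]

lemma mapOp_qt (e : α ≃ β) (hQ : Quasitrivial F) : Quasitrivial (mapOp e F) := by
  intro x y
  rcases hQ (e.symm x) (e.symm y) with h | h
  · left; simp [mapOp, h]
  · right; simp [mapOp, h]

lemma lo_mapOp (e : α ≃ β) (x y : β) :
    lo (mapOp e F) x y ↔ lo F (e.symm x) (e.symm y) := by
  simp [lo, mapOp, Equiv.apply_eq_iff_eq_symm_apply]

lemma hgt_mapOp (e : α ≃ β) (x : β) : hgt (mapOp e F) x = hgt F (e.symm x) := by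
  unfold hgt
  apply Finset.card_bij' (fun y _ => e.symm y) (fun z _ => e z)
  · intro y hy
    simp only [Finset.mem_filter, Finset.mem_univ, true_and, lo_mapOp] at hy ⊢
    exact hy
  · intro z hz
    simp only [Finset.mem_filter, Finset.mem_univ, true_and, lo_mapOp,
      Equiv.symm_apply_apply] at hz ⊢
    exact hz
  · intro y _; simp
  · intro z _; simp

lemma bP_mapOp (e : α ≃ β) (x : β) : bP (mapOp e F) x ↔ bP F (e.symm x) := by
  constructor
  · rintro ⟨y, hne, h1, h2, h3⟩
    refine ⟨e.symm y, fun h => hne (by rw [← e.apply_symm_apply y, h, e.apply_symm_apply]),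
      (lo_mapOp e x y).mp h1, (lo_mapOp e y x).mp h2, ?_⟩
    exact e.eq_symm_apply.mpr h3
  · rintro ⟨z, hne, h1, h2, h3⟩
    refine ⟨e z, fun h => hne (by simpa using congrArg e.symm h), ?_, ?_, ?_⟩
    · rw [lo_mapOp, Equiv.symm_apply_apply]; exact h1
    · rw [lo_mapOp, Equiv.symm_apply_apply]; exact h2
    · show e (F (e.symm x) (e.symm (e z))) = e z
      rw [Equiv.symm_apply_apply, h3]

lemma sig_mapOp (e : α ≃ β) : sig (mapOp e F) = sig F := by
  unfold sig
  ext p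
  simp only [Finset.mem_image, Finset.mem_univ, true_and]
  constructor
  · rintro ⟨x, hx⟩
    exact ⟨e.symm x, by rw [← hgt_mapOp e x, ← decide_eq_decide.mpr (bP_mapOp e x)]; exact hx⟩
  · rintro ⟨a, ha⟩
    refine ⟨e a, ?_⟩
    have h1 := hgt_mapOp (F := F) e (e a)
    have h2 := bP_mapOp (F := F) e (e a)
    simp only [Equiv.symm_apply_apply] at h1 h2
    rw [h1, decide_eq_decide.mpr h2]
    exact ha

end MapOp

lemma card_hgt_lt (hA : Assoc F) (hQ : Quasitrivial F) (x₀ : α) :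
    (Finset.univ.filter fun y => hgt F y < hgt F x₀).card = hgt F x₀ := by
  have : (Finset.univ.filter fun y => hgt F y < hgt F x₀)
      = (Finset.univ.filter fun y => lo F y x₀ ∧ ¬ lo F x₀ y) := by
    ext y
    simp only [Finset.mem_filter, Finset.mem_univ, true_and]
    constructor
    · exact fun h => lt_of_hgt_lt hA hQ h
    · exact fun h => hgt_strict hA hQ h.1 h.2
  rw [this]; rfl

lemma hgt_lt_card (x : α) : hgt F x < Fintype.card α := by
  have hsub : (Finset.univ.filter fun y => lo F y x ∧ ¬ lo F x y) ⊆ Finset.univ.erase x := by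
    intro y hy
    simp only [Finset.mem_filter, Finset.mem_univ, true_and] at hy
    refine Finset.mem_erase.mpr ⟨fun h => hy.2 (h ▸ hy.1), Finset.mem_univ y⟩
  calc hgt F x ≤ (Finset.univ.erase x).card := Finset.card_le_card hsub
    _ < Finset.univ.card := Finset.card_erase_lt_of_mem (Finset.mem_univ x)
    _ = Fintype.card α := rfl

section Norm

variable {n : ℕ}

lemma mono_hgt_le {F : Fin n → Fin n → Fin n} (hA : Assoc F) (hQ : Quasitrivial F)
    (hmono : Monotone (hgt F)) (x : Fin n) : hgt F x ≤ x.val := by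
  have hsub : (Finset.univ.filter fun y => hgt F y < hgt F x) ⊆ Finset.Iio x := by
    intro y hy
    simp only [Finset.mem_filter, Finset.mem_univ, true_and] at hy
    rw [Finset.mem_Iio]
    by_contra h
    exact absurd (hmono (not_lt.mp h)) (by omega)
  calc hgt F x = _ := (card_hgt_lt hA hQ x).symm
    _ ≤ (Finset.Iio x).card := Finset.card_le_card hsub
    _ = x.val := by rw [Fin.card_Iio]

lemma mono_attained {F : Fin n → Fin n → Fin n} (hA : Assoc F) (hQ : Quasitrivial F)
    (hmono : Monotone (hgt F)) {v : ℕ} (x₀ : Fin n) (hv : hgt F x₀ = v)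
    (x : Fin n) (hvx : v ≤ x.val) : v ≤ hgt F x := by
  by_contra h
  have hsub : Finset.Iic x ⊆ (Finset.univ.filter fun y => hgt F y < hgt F x₀) := by
    intro y hy
    rw [Finset.mem_Iic] at hy
    simp only [Finset.mem_filter, Finset.mem_univ, true_and, hv]
    have := hmono hy
    omega
  have := Finset.card_le_card hsub
  rw [Fin.card_Iic, card_hgt_lt hA hQ x₀, hv] at this
  omega

lemma norm_unique {F G : Fin n → Fin n → Fin n} (hA : Assoc F) (hQ : Quasitrivial F)
    (hA' : Assoc G) (hQ' : Quasitrivial G)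
    (hmF : Monotone (hgt F)) (hmG : Monotone (hgt G)) (hs : sig F = sig G) : F = G := by
  have hhgt : ∀ x, hgt F x = hgt G x := by
    have key : ∀ (F' G' : Fin n → Fin n → Fin n), Assoc F' → Quasitrivial F' →
        Assoc G' → Quasitrivial G' → Monotone (hgt F') → Monotone (hgt G') →
        sig F' = sig G' → ∀ x, hgt F' x ≤ hgt G' x := by
      intro F' G' hA1 hQ1 hA2 hQ2 hm1 hm2 hs x
      have hmem : (hgt F' x, decide (bP F' x)) ∈ sig G' := by
        rw [← hs]; exact Finset.mem_image_of_mem _ (Finset.mem_univ x)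
      rw [sig, Finset.mem_image] at hmem
      obtain ⟨a, _, ha⟩ := hmem
      have hav : hgt G' a = hgt F' x := (Prod.mk.injEq _ _ _ _).mp ha |>.1
      exact mono_attained hA2 hQ2 hm2 a hav x (mono_hgt_le hA1 hQ1 hm1 x)
    exact fun x => le_antisymm (key F G hA hQ hA' hQ' hmF hmG hs x)
      (key G F hA' hQ' hA hQ hmG hmF hs.symm x)
  have hbp : ∀ x, bP F x ↔ bP G x := by
    intro x
    have hmem : (hgt F x, decide (bP F x)) ∈ sig G := by
      rw [← hs]; exact Finset.mem_image_of_mem _ (Finset.mem_univ x)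
    rw [sig, Finset.mem_image] at hmem
    obtain ⟨a, _, ha⟩ := hmem
    obtain ⟨ha1, ha2⟩ := Prod.mk.injEq _ _ _ _ |>.mp ha
    have hGax : bP G a ↔ bP G x := bP_congr hA' hQ' (by rw [ha1, hhgt x])
    have hiff : bP G a ↔ bP F x := decide_eq_decide.mp ha2
    exact hiff.symm.trans hGax
  exact ext_of_hgt_bP hA hQ hA' hQ' hhgt hbp

def nrm (F : Fin n → Fin n → Fin n) : Fin n → Fin n → Fin n :=
  mapOp ((Tuple.sort (hgt F))⁻¹ : Equiv.Perm (Fin n)) F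

lemma nrm_eq_conj (F : Fin n → Fin n → Fin n) :
    nrm F = conjOp ((Tuple.sort (hgt F))⁻¹) F := rfl

lemma hgt_nrm (F : Fin n → Fin n → Fin n) (x : Fin n) :
    hgt (nrm F) x = hgt F (Tuple.sort (hgt F) x) := by
  rw [nrm, hgt_mapOp]
  congr 1

lemma mono_hgt_nrm (F : Fin n → Fin n → Fin n) : Monotone (hgt (nrm F)) := by
  have : hgt (nrm F) = hgt F ∘ (Tuple.sort (hgt F)) := funext fun x => hgt_nrm F x
  rw [this]
  exact Tuple.monotone_sort (hgt F)

lemma nrm_assoc {F : Fin n → Fin n → Fin n} (hA : Assoc F) : Assoc (nrm F) :=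
  mapOp_assoc _ hA

lemma nrm_qt {F : Fin n → Fin n → Fin n} (hQ : Quasitrivial F) : Quasitrivial (nrm F) :=
  mapOp_qt _ hQ

lemma sig_nrm (F : Fin n → Fin n → Fin n) : sig (nrm F) = sig F := sig_mapOp _

end Norm



def ValidF : ℕ → Finset (Finset (ℕ × Bool))
  | 0 => {∅}
  | (n+1) => (Finset.range (n+1)).attach.biUnion fun m =>
      ((if m.1 = n then {false} else {false, true}) : Finset Bool).biUnion fun b =>
        (ValidF m.1).image (insert (m.1, b))
  decreasing_by exact Finset.mem_range.mp m.2

lemma validF_zero : ValidF 0 = {∅} := by rw [ValidF]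

lemma validF_succ (n : ℕ) : ValidF (n+1) = (Finset.range (n+1)).attach.biUnion fun m =>
      ((if m.1 = n then {false} else {false, true}) : Finset Bool).biUnion fun b =>
        (ValidF m.1).image (insert (m.1, b)) := by rw [ValidF]


lemma validF_fst_lt : ∀ n, ∀ S ∈ ValidF n, ∀ p ∈ S, p.1 < n := by
  intro n
  induction n using Nat.strong_induction_on with
  | _ n ih =>
    match n with
    | 0 => intro S hS p hp; rw [validF_zero] at hS; simp at hS; subst hS; simp at hp
    | (n+1) =>
      intro S hS p hp
      rw [validF_succ] at hS
      simp only [Finset.mem_biUnion, Finset.mem_attach, Finset.mem_image, true_and] at hS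
      obtain ⟨m, b, hb, T, hT, hS⟩ := hS
      have hm : m.1 < n + 1 := Finset.mem_range.mp m.2
      subst hS
      rcases Finset.mem_insert.mp hp with h | h
      · rw [h]; exact hm
      · exact lt_trans (ih m.1 hm T hT p h) hm

lemma exists_decomp {n : ℕ} {S : Finset (ℕ × Bool)} (hS : S ∈ ValidF (n+1)) :
    ∃ m b T, m < n + 1 ∧ T ∈ ValidF m ∧ S = insert (m, b) T ∧ (m = n → b = false) := by
  rw [validF_succ] at hS
  simp only [Finset.mem_biUnion, Finset.mem_attach, Finset.mem_image, true_and] at hS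
  obtain ⟨m, b, hb, T, hT, hS⟩ := hS
  refine ⟨m.1, b, T, Finset.mem_range.mp m.2, hT, hS.symm, ?_⟩
  intro hmn
  rw [hmn, if_pos rfl] at hb
  simpa using hb

lemma mem_validF_of_decomp {n m : ℕ} {b : Bool} {T : Finset (ℕ × Bool)}
    (hm : m < n + 1) (hT : T ∈ ValidF m) (hb : m = n → b = false) :
    insert (m, b) T ∈ ValidF (n+1) := by
  rw [validF_succ]
  simp only [Finset.mem_biUnion, Finset.mem_attach, Finset.mem_image, true_and]
  refine ⟨⟨m, Finset.mem_range.mpr hm⟩, b, ?_, T, hT, rfl⟩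
  by_cases h : m = n
  · rw [if_pos h, hb h]; simp
  · rw [if_neg h]; cases b <;> simp

lemma validF_card_succ (n : ℕ) : (ValidF (n+1)).card
    = ∑ m ∈ Finset.range (n+1), (if m = n then 1 else 2) * (ValidF m).card := by
  rw [validF_succ]
  rw [Finset.card_biUnion]
  · rw [← Finset.sum_attach (Finset.range (n+1))
      (fun m => (if m = n then 1 else 2) * (ValidF m).card)]
    apply Finset.sum_congr rfl
    intro m _
    rw [Finset.card_biUnion]
    · have himg : ∀ b : Bool, ((ValidF m.1).image (insert (m.1, b))).card = (ValidF m.1).card := by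
        intro b
        apply Finset.card_image_of_injOn
        intro T hT T' hT' hTT'
        have h1 : (m.1, b) ∉ T := fun h => absurd (validF_fst_lt m.1 T hT _ h) (by simp)
        have h2 : (m.1, b) ∉ T' := fun h => absurd (validF_fst_lt m.1 T' hT' _ h) (by simp)
        rw [← Finset.erase_insert h1, ← Finset.erase_insert h2, hTT']
      by_cases h : m.1 = n
      · rw [if_pos h, if_pos h]
        simp [himg]
      · rw [if_neg h, if_neg h]
        rw [Finset.sum_insert (by simp), Finset.sum_singleton, himg, himg]
        ring
    · -- inner disjointness over b
      intro b hb b' hb' hbb'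
      simp only [Finset.disjoint_left]
      intro S hS hS'
      rw [Finset.mem_image] at hS hS'
      obtain ⟨T, hT, hST⟩ := hS
      obtain ⟨T', hT', hST'⟩ := hS'
      apply hbb'
      have : (m.1, b') ∈ insert (m.1, b) T := by rw [hST, ← hST']; exact Finset.mem_insert_self _ _
      rcases Finset.mem_insert.mp this with h | h
      · exact (Prod.mk.injEq _ _ _ _ |>.mp h.symm).2
      · exact absurd (validF_fst_lt m.1 T hT _ h) (by simp)
  · -- outer disjointness over m
    intro m _ m' _ hmm'
    simp only [Finset.disjoint_left]
    intro S hS hS'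
    simp only [Finset.mem_biUnion] at hS hS'
    obtain ⟨b, _, hS⟩ := hS
    obtain ⟨b', _, hS'⟩ := hS'
    rw [Finset.mem_image] at hS hS'
    obtain ⟨T, hT, hST⟩ := hS
    obtain ⟨T', hT', hST'⟩ := hS'
    apply hmm'
    have key : ∀ (a a' : ℕ) (c c' : Bool) (U U' : Finset (ℕ × Bool)),
        (∀ p ∈ U, p.1 < a) → (∀ p ∈ U', p.1 < a') →
        insert (a, c) U = insert (a', c') U' → a ≤ a' := by
      intro a a' c c' U U' hU hU' heq
      have : (a, c) ∈ insert (a', c') U' := by rw [← heq]; exact Finset.mem_insert_self _ _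
      rcases Finset.mem_insert.mp this with h | h
      · exact le_of_eq (Prod.mk.injEq _ _ _ _ |>.mp h).1
      · exact le_of_lt (hU' _ h)
    have h1 := key m.1 m'.1 b b' T T' (validF_fst_lt m.1 T hT) (validF_fst_lt m'.1 T' hT')
      (hST.trans hST'.symm)
    have h2 := key m'.1 m.1 b' b T' T (validF_fst_lt m'.1 T' hT') (validF_fst_lt m.1 T hT)
      (hST'.trans hST.symm)
    exact Subtype.ext (le_antisymm h1 h2)

lemma validF_card_zero : (ValidF 0).card = 1 := by rw [validF_zero]; rfl

lemma validF_card_one : (ValidF 1).card = 1 := by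
  rw [validF_card_succ]
  simp [validF_card_zero]

lemma validF_card_rec (n : ℕ) :
    (ValidF (n+2)).card = 2 * (ValidF (n+1)).card + (ValidF n).card := by
  have hA := validF_card_succ (n+1)
  have hB := validF_card_succ n
  have e1 : ∀ k, (∑ m ∈ Finset.range (k+1), (if m = k then 1 else 2) * (ValidF m).card)
      = 2 * (∑ m ∈ Finset.range k, (ValidF m).card) + (ValidF k).card := by
    intro k
    rw [Finset.sum_range_succ, if_pos rfl, one_mul, Finset.mul_sum]
    congr 1
    apply Finset.sum_congr rfl
    intro m hm
    rw [if_neg (by simp at hm; omega)]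
  rw [e1] at hA hB
  rw [Finset.sum_range_succ] at hA
  have hA' : (ValidF (n + 2)).card
      = 2 * (∑ x ∈ Finset.range n, (ValidF x).card + (ValidF n).card)
        + (ValidF (n + 1)).card := hA
  omega


section Restrict

theorem sig_mem_validF : ∀ (n : ℕ) {α : Type} [Fintype α] [DecidableEq α]
    (F : α → α → α), Assoc F → Quasitrivial F → Fintype.card α = n → sig F ∈ ValidF n := by
  intro n
  induction n using Nat.strong_induction_on with
  | _ n ih =>
    intro α _ _ F hA hQ hcard
    match n with
    | 0 =>
      have : IsEmpty α := Fintype.card_eq_zero_iff.mp hcard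
      have hsig : sig F = ∅ := by simp [sig]
      rw [hsig, validF_zero]
      simp
    | (n+1) =>
      have hne : Nonempty α := Fintype.card_pos_iff.mp (by omega)
      have himne : ((Finset.univ : Finset α).image (hgt F)).Nonempty :=
        (Finset.univ_nonempty (α := α)).image _
      set m := ((Finset.univ : Finset α).image (hgt F)).max' himne with hm
      obtain ⟨x₀, _, hx₀⟩ := Finset.mem_image.mp (Finset.max'_mem _ himne)
      rw [← hm] at hx₀
      have hle : ∀ x : α, hgt F x ≤ m :=
        fun x => Finset.le_max' _ _ (Finset.mem_image_of_mem _ (Finset.mem_univ x))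
      have hmlt : m < n + 1 := by
        rw [← hx₀, ← hcard]; exact hgt_lt_card x₀
      have f2 : (Finset.univ.filter fun x : α => hgt F x < m).card = m := by
        rw [← hx₀]; exact card_hgt_lt hA hQ x₀
      -- the fiber at the top
      have ffiber : (Finset.univ.filter fun x : α => hgt F x = m).card = n + 1 - m := by
        have hunion : (Finset.univ : Finset α)
            = (Finset.univ.filter fun x : α => hgt F x < m)
              ∪ (Finset.univ.filter fun x : α => hgt F x = m) := by
          ext z
          simp only [Finset.mem_univ, Finset.mem_union, Finset.mem_filter, true_and, true_iff]
          have := hle z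
          omega
        have hdisj : Disjoint (Finset.univ.filter fun x : α => hgt F x < m)
            (Finset.univ.filter fun x : α => hgt F x = m) := by
          rw [Finset.disjoint_left]
          intro z hz hz'
          simp only [Finset.mem_filter] at hz hz'
          omega
        have := Finset.card_union_of_disjoint hdisj
        rw [← hunion, f2] at this
        have hcard' : (Finset.univ : Finset α).card = n + 1 := hcard
        omega
      -- singleton top class forces bP false
      have f4 : m = n → ¬ bP F x₀ := by
        intro hmn hbp
        obtain ⟨y, hyne, h1, h2, _⟩ := hbp
        have hy : hgt F y = m := by rw [← hx₀]; exact hgt_eq_of_lo_lo hA hQ h2 h1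
        have hsub : {y, x₀} ⊆ (Finset.univ.filter fun x : α => hgt F x = m) := by
          intro z hz
          rcases Finset.mem_insert.mp hz with h | h
          · subst h; simp [hy]
          · rw [Finset.mem_singleton] at h; subst h; simp [hx₀]
        have h2le := Finset.card_le_card hsub
        rw [Finset.card_insert_of_notMem (by simpa using hyne), Finset.card_singleton,
          ffiber] at h2le
        omega
      -- restriction
      let γ := {x : α // hgt F x < m}
      let F' : γ → γ → γ := fun x y => ⟨F x.1 y.1, by
        rcases hQ x.1 y.1 with h | h <;> rw [h]
        · exact x.2
        · exact y.2⟩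
      have hA' : Assoc F' := fun x y z => Subtype.ext (hA x.1 y.1 z.1)
      have hQ' : Quasitrivial F' := by
        intro x y
        rcases hQ x.1 y.1 with h | h
        · exact Or.inl (Subtype.ext h)
        · exact Or.inr (Subtype.ext h)
      have f6 : ∀ x y : γ, lo F' x y ↔ lo F x.1 y.1 := by
        intro x y
        unfold lo
        rw [Subtype.ext_iff, Subtype.ext_iff]
      have f7 : ∀ x : γ, hgt F' x = hgt F x.1 := by
        intro x
        apply Finset.card_bij (fun (y : γ) _ => y.1)
        · intro a ha
          simp only [Finset.mem_filter, Finset.mem_univ, true_and, f6] at ha ⊢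
          exact ha
        · intro a _ b _ h
          exact Subtype.ext h
        · intro z hz
          simp only [Finset.mem_filter, Finset.mem_univ, true_and] at hz
          have hzm : hgt F z < m := lt_trans (hgt_strict hA hQ hz.1 hz.2) x.2
          refine ⟨⟨z, hzm⟩, ?_, rfl⟩
          simp only [Finset.mem_filter, Finset.mem_univ, true_and, f6]
          exact hz
      have f8 : ∀ x : γ, bP F' x ↔ bP F x.1 := by
        intro x
        constructor
        · rintro ⟨y, hyne, h1, h2, h3⟩
          exact ⟨y.1, fun h => hyne (Subtype.ext h), (f6 x y).mp h1, (f6 y x).mp h2,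
            congrArg Subtype.val h3⟩
        · rintro ⟨y, hyne, h1, h2, h3⟩
          have hym : hgt F y < m := by
            rw [hgt_eq_of_lo_lo hA hQ h2 h1]
            exact x.2
          refine ⟨⟨y, hym⟩, fun h => hyne (congrArg Subtype.val h), (f6 _ _).mpr h1,
            (f6 _ _).mpr h2, Subtype.ext h3⟩
      have f9 : sig F' = (sig F).filter (fun p => p.1 < m) := by
        ext p
        simp only [sig, Finset.mem_filter, Finset.mem_image, Finset.mem_univ, true_and]
        constructor
        · rintro ⟨x, hx⟩
          rw [f7, decide_eq_decide.mpr (f8 x)] at hx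
          refine ⟨⟨x.1, hx⟩, ?_⟩
          rw [← hx]
          exact x.2
        · rintro ⟨⟨x, hx⟩, hxm⟩
          refine ⟨⟨x, by rw [← hx] at hxm; exact hxm⟩, ?_⟩
          rw [f7, decide_eq_decide.mpr (f8 _)]
          exact hx
      have f10 : sig F = insert (m, decide (bP F x₀)) ((sig F).filter (fun p => p.1 < m)) := by
        ext p
        simp only [Finset.mem_insert, Finset.mem_filter]
        constructor
        · intro hp
          obtain ⟨x, _, hx⟩ := Finset.mem_image.mp hp
          by_cases hxm : hgt F x = m
          · left
            rw [← hx, hxm]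
            have : bP F x ↔ bP F x₀ := bP_congr hA hQ (by rw [hxm, hx₀])
            rw [decide_eq_decide.mpr this]
          · right
            refine ⟨hp, ?_⟩
            rw [← hx]
            have := hle x
            simp only
            omega
        · rintro (hp | ⟨hp, _⟩)
          · rw [hp]
            rw [sig, Finset.mem_image]
            exact ⟨x₀, Finset.mem_univ _, by rw [hx₀]⟩
          · exact hp
      have f11 : Fintype.card γ = m := by
        rw [Fintype.card_subtype]
        exact f2
      rw [f10, ← f9]
      apply mem_validF_of_decomp hmlt
      · exact ih m hmlt F' hA' hQ' f11
      · intro hmn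
        simp [f4 hmn]

end Restrict

section SumCon

variable {β : Type*} [Fintype β] [DecidableEq β]

def sumOp (F' : α → α → α) (b : Bool) : α ⊕ β → α ⊕ β → α ⊕ β
  | Sum.inl x, Sum.inl y => Sum.inl (F' x y)
  | Sum.inl _, Sum.inr t => Sum.inr t
  | Sum.inr t, Sum.inl _ => Sum.inr t
  | Sum.inr s, Sum.inr t => if b then Sum.inr t else Sum.inr s

variable {F' : α → α → α} {b : Bool}

lemma sumOp_assoc (hA' : Assoc F') : Assoc (sumOp (β := β) F' b) := by
  rintro (x | x) (y | y) (z | z) <;> cases b <;> simp [sumOp] <;> rw [hA']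

lemma sumOp_qt (hQ' : Quasitrivial F') : Quasitrivial (sumOp (β := β) F' b) := by
  rintro (x | x) (y | y) <;> cases b <;> simp [sumOp]
  · exact hQ' x y
  · exact hQ' x y

lemma lo_sum_ll (x y : α) : lo (sumOp (β := β) F' b) (.inl x) (.inl y) ↔ lo F' x y := by
  simp [lo, sumOp]

lemma lo_sum_lr (x : α) (t : β) : lo (sumOp (β := β) F' b) (.inl x) (.inr t) := by
  simp [lo, sumOp]

lemma lo_sum_rl (x : α) (t : β) : ¬ lo (sumOp (β := β) F' b) (.inr t) (.inl x) := by
  simp [lo, sumOp]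

lemma lo_sum_rr (s t : β) : lo (sumOp (β := β) F' b) (.inr s) (.inr t) := by
  cases b <;> simp [lo, sumOp]

lemma hgt_sum_inl (x : α) : hgt (sumOp (β := β) F' b) (.inl x) = hgt F' x := by
  symm
  apply Finset.card_bij (fun y _ => Sum.inl y)
  · intro a ha
    simp only [Finset.mem_filter, Finset.mem_univ, true_and, lo_sum_ll] at ha ⊢
    exact ha
  · intro a _ a' _ h
    exact Sum.inl_injective h
  · rintro (y | t) hy
    · simp only [Finset.mem_filter, Finset.mem_univ, true_and, lo_sum_ll] at hy
      exact ⟨y, by simp only [Finset.mem_filter, Finset.mem_univ, true_and]; exact hy, rfl⟩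
    · simp only [Finset.mem_filter, Finset.mem_univ, true_and] at hy
      exact absurd hy.1 (lo_sum_rl x t)

lemma hgt_sum_inr (t : β) : hgt (sumOp (β := β) F' b) (.inr t) = Fintype.card α := by
  symm
  apply Finset.card_bij (fun (y : α) _ => Sum.inl y)
  · intro a _
    simp only [Finset.mem_filter, Finset.mem_univ, true_and]
    exact ⟨lo_sum_lr a t, lo_sum_rl a t⟩
  · intro a _ a' _ h
    exact Sum.inl_injective h
  · rintro (y | s) hy
    · exact ⟨y, Finset.mem_univ y, rfl⟩
    · simp only [Finset.mem_filter, Finset.mem_univ, true_and] at hy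
      exact absurd (lo_sum_rr t s) hy.2

lemma bP_sum_inl (x : α) : bP (sumOp (β := β) F' b) (.inl x) ↔ bP F' x := by
  constructor
  · rintro ⟨(y | t), hne, h1, h2, h3⟩
    · refine ⟨y, fun h => hne (congrArg Sum.inl h), (lo_sum_ll x y).mp h1,
        (lo_sum_ll y x).mp h2, Sum.inl_injective h3⟩
    · exact absurd h2 (lo_sum_rl x t)
  · rintro ⟨y, hne, h1, h2, h3⟩
    exact ⟨.inl y, fun h => hne (Sum.inl_injective h), (lo_sum_ll x y).mpr h1,
      (lo_sum_ll y x).mpr h2, congrArg Sum.inl h3⟩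

lemma bP_sum_inr_false (t : β) (hb : b = false) : ¬ bP (sumOp (β := β) F' b) (.inr t) := by
  rintro ⟨(y | s), hne, h1, h2, h3⟩
  · exact absurd h1 (lo_sum_rl y t)
  · rw [hb] at h3
    simp only [sumOp, if_neg Bool.false_ne_true] at h3
    exact hne h3.symm

lemma bP_sum_inr_true (t : β) (hb : b = true) (h2 : 1 < Fintype.card β) :
    bP (sumOp (β := β) F' b) (.inr t) := by
  obtain ⟨s, hs⟩ := Fintype.exists_ne_of_one_lt_card h2 t
  refine ⟨.inr s, fun h => hs (Sum.inr_injective h), lo_sum_rr t s, lo_sum_rr s t, ?_⟩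
  rw [hb]
  simp [sumOp]

lemma decide_bP_sum_inr (t : β) (hb1 : b = true → 1 < Fintype.card β) :
    decide (bP (sumOp (β := β) F' b) (.inr t)) = b := by
  cases hbv : b with
  | false => simpa using bP_sum_inr_false (b := false) (F' := F') t rfl
  | true => simpa using bP_sum_inr_true (b := true) (F' := F') t rfl (hb1 hbv)

lemma sig_sum (hb1 : b = true → 1 < Fintype.card β) (hne : Nonempty β) :
    sig (sumOp (β := β) F' b) = insert (Fintype.card α, b) (sig F') := by
  ext p
  simp only [sig, Finset.mem_insert, Finset.mem_image, Finset.mem_univ, true_and]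
  constructor
  · rintro ⟨(x | t), hx⟩
    · right
      refine ⟨x, ?_⟩
      rw [← hx, hgt_sum_inl, decide_eq_decide.mpr (bP_sum_inl x)]
    · left
      rw [← hx, hgt_sum_inr, decide_bP_sum_inr t hb1]
  · rintro (hp | ⟨x, hx⟩)
    · obtain ⟨t⟩ := hne
      refine ⟨.inr t, ?_⟩
      rw [hgt_sum_inr, decide_bP_sum_inr t hb1, hp]
    · refine ⟨.inl x, ?_⟩
      rw [hgt_sum_inl, decide_eq_decide.mpr (bP_sum_inl x), hx]

end SumCon

def Realizable (n : ℕ) (S : Finset (ℕ × Bool)) : Prop :=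
  ∃ F : Fin n → Fin n → Fin n, Assoc F ∧ Quasitrivial F ∧ sig F = S

theorem validF_realizable : ∀ n S, S ∈ ValidF n → Realizable n S := by
  intro n
  induction n using Nat.strong_induction_on with
  | _ n ih =>
    match n with
    | 0 =>
      intro S hS
      rw [validF_zero, Finset.mem_singleton] at hS
      subst hS
      refine ⟨fun x _ => x, fun x => x.elim0, fun x => x.elim0, ?_⟩
      simp [sig]
    | (n+1) =>
      intro S hS
      obtain ⟨m, b, T, hm, hT, hST, hbn⟩ := exists_decomp hS
      obtain ⟨F', hA', hQ', hsig'⟩ := ih m hm T hT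
      have hne : Nonempty (Fin (n + 1 - m)) := by
        rw [← Fin.pos_iff_nonempty]
        omega
      have hb1 : b = true → 1 < Fintype.card (Fin (n + 1 - m)) := by
        intro hb
        rw [Fintype.card_fin]
        by_cases h : m = n
        · rw [hbn h] at hb; simp at hb
        · omega
      let G := sumOp (β := Fin (n + 1 - m)) F' b
      have hAG : Assoc G := sumOp_assoc hA'
      have hQG : Quasitrivial G := sumOp_qt hQ'
      have hsigG : sig G = S := by
        rw [sig_sum hb1 hne, Fintype.card_fin, hsig', hST]
      have hcard : Fintype.card (Fin m ⊕ Fin (n + 1 - m)) = n + 1 := by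
        simp only [Fintype.card_sum, Fintype.card_fin]
        omega
      let e : (Fin m ⊕ Fin (n + 1 - m)) ≃ Fin (n + 1) :=
        (Fintype.equivFin _).trans (finCongr hcard)
      refine ⟨mapOp e G, mapOp_assoc e hAG, mapOp_qt e hQG, ?_⟩
      rw [sig_mapOp, hsigG]

theorem card_quot (n : ℕ) : Nat.card (Quot (orbitRel n)) = (ValidF n).card := by
  classical
  have hresp : ∀ (F G : {F : Fin n → Fin n → Fin n // Assoc F ∧ Quasitrivial F}),
      orbitRel n F G → sig F.1 = sig G.1 := by
    rintro F G ⟨σ, hσ⟩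
    rw [hσ]
    exact (sig_mapOp σ).symm
  have hbij : Function.Bijective
      (Quot.lift (fun F : {F : Fin n → Fin n → Fin n // Assoc F ∧ Quasitrivial F} =>
          (⟨sig F.1, sig_mem_validF n F.1 F.2.1 F.2.2 (Fintype.card_fin n)⟩ :
            {S // S ∈ ValidF n}))
        (fun F G h => Subtype.ext (hresp F G h))) := by
    constructor
    · intro a b
      induction a using Quot.ind with | _ F => ?_
      induction b using Quot.ind with | _ G => ?_
      intro h
      have hsig : sig F.1 = sig G.1 := congrArg Subtype.val h
      have h1 : Quot.mk (orbitRel n) F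
          = Quot.mk (orbitRel n) ⟨nrm F.1, nrm_assoc F.2.1, nrm_qt F.2.2⟩ :=
        Quot.sound ⟨(Tuple.sort (hgt F.1))⁻¹, rfl⟩
      have h2 : Quot.mk (orbitRel n) G
          = Quot.mk (orbitRel n) ⟨nrm G.1, nrm_assoc G.2.1, nrm_qt G.2.2⟩ :=
        Quot.sound ⟨(Tuple.sort (hgt G.1))⁻¹, rfl⟩
      have h3 : nrm F.1 = nrm G.1 :=
        norm_unique (nrm_assoc F.2.1) (nrm_qt F.2.2) (nrm_assoc G.2.1) (nrm_qt G.2.2)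
          (mono_hgt_nrm F.1) (mono_hgt_nrm G.1) (by rw [sig_nrm, sig_nrm, hsig])
      rw [h1, h2]
      exact congrArg _ (Subtype.ext h3)
    · rintro ⟨S, hS⟩
      obtain ⟨F, hA, hQ, hsig⟩ := validF_realizable n S hS
      exact ⟨Quot.mk _ ⟨F, hA, hQ⟩, Subtype.ext hsig⟩
  calc Nat.card (Quot (orbitRel n)) = Nat.card {S // S ∈ ValidF n} :=
        Nat.card_congr (Equiv.ofBijective _ hbij)
    _ = (ValidF n).card := by rw [Nat.card_eq_fintype_card, Fintype.card_coe]

section Arith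

def sN (n : ℕ) : ℕ := ∑ k ∈ Finset.range (n+1), n.choose (2*k) * 2^k
def tN (n : ℕ) : ℕ := ∑ k ∈ Finset.range (n+1), n.choose (2*k+1) * 2^k

lemma sN_ext {n m : ℕ} (h : n + 1 ≤ m) :
    ∑ k ∈ Finset.range m, n.choose (2*k) * 2^k = sN n := by
  rw [sN]
  symm
  apply Finset.sum_subset (Finset.range_subset_range.mpr h)
  intro k _ hk
  rw [Finset.mem_range, not_lt] at hk
  rw [Nat.choose_eq_zero_of_lt (by omega), zero_mul]

lemma tN_ext {n m : ℕ} (h : n + 1 ≤ m) :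
    ∑ k ∈ Finset.range m, n.choose (2*k+1) * 2^k = tN n := by
  rw [tN]
  symm
  apply Finset.sum_subset (Finset.range_subset_range.mpr h)
  intro k _ hk
  rw [Finset.mem_range, not_lt] at hk
  rw [Nat.choose_eq_zero_of_lt (by omega), zero_mul]

lemma sN_succ (n : ℕ) : sN (n+1) = sN n + 2 * tN n := by
  have h1 : sN (n+1) = (∑ k ∈ Finset.range (n+1), (n+1).choose (2*(k+1)) * 2^(k+1)) + 1 := by
    rw [sN, Finset.sum_range_succ']
    simp
  have h2 : ∀ k, (n+1).choose (2*(k+1)) = n.choose (2*k+1) + n.choose (2*k+2) := by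
    intro k
    rw [show 2*(k+1) = (2*k+1)+1 by ring]
    exact Nat.choose_succ_succ _ _
  have h3 : sN (n+1) = (∑ k ∈ Finset.range (n+1), n.choose (2*k+1) * 2^(k+1))
      + (∑ k ∈ Finset.range (n+1), n.choose (2*k+2) * 2^(k+1)) + 1 := by
    rw [h1, ← Finset.sum_add_distrib]
    congr 1
    apply Finset.sum_congr rfl
    intro k _
    rw [h2 k, add_mul]
  have h4 : ∑ k ∈ Finset.range (n+1), n.choose (2*k+1) * 2^(k+1) = 2 * tN n := by
    rw [tN, Finset.mul_sum]
    apply Finset.sum_congr rfl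
    intro k _
    ring
  have h5 : sN n = (∑ k ∈ Finset.range (n+1), n.choose (2*k+2) * 2^(k+1)) + 1 := by
    rw [sN, Finset.sum_range_succ']
    simp only [Nat.mul_zero, Nat.choose_zero_right, pow_zero, mul_one]
    congr 1
    rw [Finset.sum_range_succ, Nat.choose_eq_zero_of_lt (by omega), zero_mul, add_zero]
    apply Finset.sum_congr rfl
    intro k _
    rw [show 2*(k+1) = 2*k+2 by ring]
  omega

lemma tN_succ (n : ℕ) : tN (n+1) = sN n + tN n := by
  have h1 : tN (n+1) = ∑ k ∈ Finset.range (n+2), ((n.choose (2*k)) * 2^k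
      + (n.choose (2*k+1)) * 2^k) := by
    rw [tN]
    apply Finset.sum_congr rfl
    intro k _
    rw [Nat.choose_succ_succ, add_mul]
  rw [h1, Finset.sum_add_distrib, sN_ext (by omega), tN_ext (by omega)]

lemma sN_rec (n : ℕ) : sN (n+2) = 2 * sN (n+1) + sN n := by
  have h1 : sN (n+2) = sN (n+1) + 2 * tN (n+1) := sN_succ (n+1)
  have h2 := tN_succ n
  have h3 := sN_succ n
  omega

lemma sN_zero : sN 0 = 1 := by decide
lemma sN_one : sN 1 = 1 := by decide

lemma v_eq_sN (n : ℕ) : (ValidF n).card = sN n := by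
  induction n using Nat.strong_induction_on with
  | _ n ih =>
    match n with
    | 0 => rw [validF_card_zero, sN_zero]
    | 1 => rw [validF_card_one, sN_one]
    | (n+2) =>
      rw [validF_card_rec, sN_rec, ih (n+1) (by omega), ih n (by omega)]

lemma real_closed (v : ℕ → ℕ) (h0 : v 0 = 1) (h1 : v 1 = 1)
    (hrec : ∀ n, v (n+2) = 2 * v (n+1) + v n) :
    ∀ n, (v n : ℝ) = (1 + Real.sqrt 2) ^ n / 2 + (1 - Real.sqrt 2) ^ n / 2 := by
  have hs : Real.sqrt 2 ^ 2 = 2 := Real.sq_sqrt (by norm_num)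
  have key : ∀ n, ((v n : ℝ) = (1 + Real.sqrt 2) ^ n / 2 + (1 - Real.sqrt 2) ^ n / 2)
      ∧ ((v (n+1) : ℝ) = (1 + Real.sqrt 2) ^ (n+1) / 2 + (1 - Real.sqrt 2) ^ (n+1) / 2) := by
    intro n
    induction n with
    | zero =>
      constructor
      · rw [h0]; norm_num
      · rw [h1]; push_cast; ring_nf
    | succ n ihn =>
      refine ⟨ihn.2, ?_⟩
      rw [hrec n]
      push_cast
      rw [ihn.1, ihn.2]
      have e1 : (1 + Real.sqrt 2) ^ (n+1+1) = (1 + Real.sqrt 2) ^ n * (3 + 2 * Real.sqrt 2) := by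
        rw [show n+1+1 = n+2 by ring, pow_add]
        congr 1
        nlinarith [hs]
      have e2 : (1 - Real.sqrt 2) ^ (n+1+1) = (1 - Real.sqrt 2) ^ n * (3 - 2 * Real.sqrt 2) := by
        rw [show n+1+1 = n+2 by ring, pow_add]
        congr 1
        nlinarith [hs]
      have e3 : (1 + Real.sqrt 2) ^ (n+1) = (1 + Real.sqrt 2) ^ n * (1 + Real.sqrt 2) := by
        rw [pow_succ]
      have e4 : (1 - Real.sqrt 2) ^ (n+1) = (1 - Real.sqrt 2) ^ n * (1 - Real.sqrt 2) := by
        rw [pow_succ]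
      rw [e1, e2, e3, e4]
      ring
  exact fun n => (key n).1

end Arith

end AQ

theorem stmt_10 (r : ℕ → ℕ)
    (hr : ∀ n, r n = Nat.card (Quot (orbitRel n))) :
    r 0 = 1 ∧ r 1 = 1 ∧
    (∀ n, r (n + 2) = 2 * r (n + 1) + r n) ∧
    (∀ n, (r n : ℝ) =
      (1 + Real.sqrt 2) ^ n / 2 + (1 - Real.sqrt 2) ^ n / 2) ∧
    (∀ n, r n = ∑ k ∈ Finset.range (n + 1), n.choose (2 * k) * 2 ^ k) := by
  have hv : ∀ n, r n = (AQ.ValidF n).card := fun n => (hr n).trans (AQ.card_quot n)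
  refine ⟨?_, ?_, ?_, ?_, ?_⟩
  · rw [hv 0, AQ.validF_card_zero]
  · rw [hv 1, AQ.validF_card_one]
  · intro n
    rw [hv, hv, hv, AQ.validF_card_rec]
  · intro n
    rw [hv n]
    exact AQ.real_closed (fun k => (AQ.ValidF k).card) AQ.validF_card_zero
      AQ.validF_card_one AQ.validF_card_rec n
  · intro n
    rw [hv n]
    exact AQ.v_eq_sN n
end

section
/- A nondecreasing sequence (c₁,…,cₙ) of positive integers is the fiber-size sequence |F⁻¹| of some associative quasitrivial operation F on Xₙ if and only if for every i, cᵢ = min{j : c_j = cᵢ} + max{j : c_j = cᵢ} − 1. -/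
open Finset

section TotalPreorder

variable {α : Type*} [Fintype α] (r : α → α → Prop) [DecidableRel r]

def lowerCardSum (z : α) : ℕ := #{w | r w z ∧ ¬ r z w} + #{w | r w z}

variable {r} [IsTrans α r]

lemma lowerCardSum_le_lowerCardSum {w z : α} (h : r w z) :
    lowerCardSum r w ≤ lowerCardSum r z := by
  unfold lowerCardSum
  gcongr with v
  · exact fun hvw => _root_.trans hvw h
  · exact fun hzv => _root_.trans h hzv
  · exact fun hvw => _root_.trans hvw h

lemma lowerCardSum_lt_lowerCardSum [Std.Refl r] {w z : α} (h : r w z) (h' : ¬ r z w) :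
    lowerCardSum r w < lowerCardSum r z := by
  have hstrict_w : #{v | r v w ∧ ¬ r w v} < #{v | r v w} :=
    card_lt_card <| ssubset_iff_of_subset (monotone_filter_right _ fun _ _ => And.left) |>.2
      ⟨w, by simp [refl_of r w]⟩
  have hweak_w : #{v | r v w} ≤ #{v | r v z ∧ ¬ r z v} := by
    gcongr with v
    exact fun hvw => ⟨_root_.trans hvw h, fun hzv => h' (_root_.trans hzv hvw)⟩
  have hweak : #{v | r v w} ≤ #{v | r v z} := by
    gcongr with v
    exact fun hvw => _root_.trans hvw h
  unfold lowerCardSum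
  omega

lemma lowerCardSum_lt_lowerCardSum_iff [Std.Total r] {w z : α} :
    lowerCardSum r w < lowerCardSum r z ↔ r w z ∧ ¬ r z w := by
  refine ⟨fun h => ⟨?_, fun hzw => (lowerCardSum_le_lowerCardSum hzw).not_gt h⟩,
    fun h => lowerCardSum_lt_lowerCardSum h.1 h.2⟩
  by_contra hwz
  exact (lowerCardSum_le_lowerCardSum ((total_of r w z).resolve_left hwz)).not_gt h

lemma lowerCardSum_le_lowerCardSum_iff [Std.Total r] {w z : α} :
    lowerCardSum r w ≤ lowerCardSum r z ↔ r w z := by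
  refine ⟨fun h => ?_, lowerCardSum_le_lowerCardSum⟩
  by_contra hwz
  exact (lowerCardSum_lt_lowerCardSum ((total_of r w z).resolve_left hwz) hwz).not_ge h

lemma lowerCardSum_eq_card_lt_add_card_le [Std.Total r] (z : α) :
    lowerCardSum r z = #{w | lowerCardSum r w < lowerCardSum r z} +
      #{w | lowerCardSum r w ≤ lowerCardSum r z} := by
  simp only [lowerCardSum_lt_lowerCardSum_iff, lowerCardSum_le_lowerCardSum_iff]
  rfl

end TotalPreorder

def SelfCounting (s : Multiset ℕ) : Prop :=
  ∀ v ∈ s, v = s.countP (· < v) + s.countP (· ≤ v)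

lemma selfCounting_map_univ_iff {α : Type*} [Fintype α] {f : α → ℕ} :
    SelfCounting (univ.val.map f) ↔ ∀ z, f z = #{w | f w < f z} + #{w | f w ≤ f z} := by
  simp only [SelfCounting, Multiset.forall_mem_map_iff, Multiset.countP_map, mem_univ_val,
    forall_const]
  rfl

section Quasitrivial

variable {α : Type*} {F : α → α → α}

def Precedes (F : α → α → α) (x y : α) : Prop := F x y = y ∨ F y x = y

instance [DecidableEq α] : DecidableRel (Precedes F) :=
  fun _ _ => inferInstanceAs (Decidable (_ ∨ _))

lemma Quasitrivial.idem (hQ : Quasitrivial F) (x : α) : F x x = x :=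
  (hQ x x).elim id id

lemma Quasitrivial.precedes_total (hQ : Quasitrivial F) : Std.Total (Precedes F) :=
  ⟨fun x y => (hQ x y).symm.imp Or.inl Or.inr⟩

lemma Assoc.precedes_trans (hA : Assoc F) (hQ : Quasitrivial F) : IsTrans α (Precedes F) := by
  refine ⟨fun x y z hxy hyz => ?_⟩
  by_contra hxz
  have hxz₁ : F x z = x := (hQ x z).resolve_right fun h => hxz (Or.inl h)
  have hzx₁ : F z x = x := (hQ z x).resolve_left fun h => hxz (Or.inr h)
  rcases hyz with hyz | hzy <;> rcases hxy with hxy | hyx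
  · refine hxz (Or.inl ?_)
    calc F x z = F x (F y z) := by rw [hyz]
      _ = F (F x y) z := (hA x y z).symm
      _ = z := by rw [hxy, hyz]
  · have hyx : y = x := calc
      y = F y (F z x) := by rw [hzx₁, hyx]
      _ = F (F y z) x := (hA y z x).symm
      _ = x := by rw [hyz, hzx₁]
    exact hxz (Or.inl (hyx ▸ hyz))
  · have hzy : z = y := calc
      z = F z (F x y) := by rw [hxy, hzy]
      _ = F (F z x) y := (hA z x y).symm
      _ = y := by rw [hzx₁, hxy]
    exact hxz (Or.inl (hzy ▸ hxy))
  · refine hxz (Or.inr ?_)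
    calc F z x = F (F z y) x := by rw [hzy]
      _ = F z (F y x) := hA z y x
      _ = z := by rw [hyx, hzy]

variable [Fintype α] [DecidableEq α]

lemma Quasitrivial.card_fiber_add_one (hQ : Quasitrivial F) (z : α) :
    #{p : α × α | F p.1 p.2 = z} + 1 = #{y | F z y = z} + #{x | F x z = z} := by
  set L : Finset α := {y | F z y = z} with hL
  set R : Finset α := {x | F x z = z} with hR
  have hfiber : ({p | F p.1 p.2 = z} : Finset (α × α)) = {z} ×ˢ L ∪ R ×ˢ {z} := by
    ext ⟨x, y⟩
    simp only [hL, hR, mem_filter, mem_univ, true_and, mem_union, mem_product, mem_singleton]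
    constructor
    · intro hxy
      rcases hQ x y with h | h
      · obtain rfl : x = z := h.symm.trans hxy
        exact Or.inl ⟨rfl, h⟩
      · obtain rfl : y = z := h.symm.trans hxy
        exact Or.inr ⟨h, rfl⟩
    · rintro (⟨rfl, h⟩ | ⟨h, rfl⟩) <;> exact h
  have hcorner : {z} ×ˢ L ∩ R ×ˢ {z} = {(z, z)} := by
    ext ⟨x, y⟩
    simp only [hL, hR, mem_inter, mem_filter, mem_univ, true_and, mem_product, mem_singleton,
      Prod.mk.injEq]
    constructor
    · rintro ⟨⟨rfl, -⟩, -, rfl⟩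
      exact ⟨rfl, rfl⟩
    · rintro ⟨rfl, rfl⟩
      exact ⟨⟨rfl, hQ.idem _⟩, hQ.idem _, rfl⟩
  rw [hfiber, ← card_singleton (z, z), ← hcorner, card_union_add_card_inter, card_product,
    card_product, card_singleton, one_mul, mul_one]

lemma Quasitrivial.card_fiber (hQ : Quasitrivial F) (z : α) :
    #{p : α × α | F p.1 p.2 = z} = lowerCardSum (Precedes F) z := by
  have hcard := hQ.card_fiber_add_one z
  set L : Finset α := {y | F z y = z} with hL
  set R : Finset α := {x | F x z = z} with hR
  have hunion : L ∪ R = ({w | Precedes F w z} : Finset α) := by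
    ext w
    simp only [hL, hR, mem_union, mem_filter, mem_univ, true_and, Precedes, or_comm]
  have hinter : L ∩ R = insert z ({w | Precedes F w z ∧ ¬ Precedes F z w} : Finset α) := by
    ext w
    simp only [hL, hR, mem_inter, mem_insert, mem_filter, mem_univ, true_and]
    unfold Precedes
    constructor
    · rintro ⟨hzw, hwz⟩
      refine or_iff_not_imp_left.2 fun hne => ⟨Or.inl hwz, ?_⟩
      rintro (h | h)
      · exact hne (h.symm.trans hzw)
      · exact hne (h.symm.trans hwz)
    · rintro (rfl | ⟨-, hzw⟩)
      · exact ⟨hQ.idem w, hQ.idem w⟩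
      · obtain ⟨hzw, hwz⟩ := not_or.1 hzw
        exact ⟨(hQ z w).resolve_right hzw, (hQ w z).resolve_left hwz⟩
  have hz : z ∉ ({w | Precedes F w z ∧ ¬ Precedes F z w} : Finset α) := by
    simp [Precedes, hQ.idem z]
  rw [← card_union_add_card_inter, hunion, hinter, card_insert_of_notMem hz] at hcard
  rw [lowerCardSum]
  omega

end Quasitrivial

section SelectMax

variable {α β : Type*} [LinearOrder β] {c : α → β}

def selectMax (c : α → β) (x y : α) : α := if c x < c y then y else x

lemma assoc_selectMax : Assoc (selectMax c) := by
  intro x y z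
  unfold selectMax
  split_ifs <;> first | rfl | order

lemma quasitrivial_selectMax : Quasitrivial (selectMax c) := by
  intro x y
  unfold selectMax
  split_ifs
  · exact Or.inr rfl
  · exact Or.inl rfl

lemma precedes_selectMax_iff {w z : α} : Precedes (selectMax c) w z ↔ c w ≤ c z := by
  unfold Precedes selectMax
  split_ifs <;> grind

end SelectMax

lemma Quasitrivial.fiberCard_eq_lowerCardSum {n : ℕ} {F : Fin n → Fin n → Fin n}
    (hQ : Quasitrivial F) (z : Fin n) : fiberCard F z = lowerCardSum (Precedes F) z := by
  rw [fiberCard, Nat.card_eq_fintype_card, Fintype.card_subtype, hQ.card_fiber]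

lemma selfCounting_fiberCard {n : ℕ} {F : Fin n → Fin n → Fin n} (hA : Assoc F)
    (hQ : Quasitrivial F) : SelfCounting (univ.val.map (fiberCard F)) := by
  have : Std.Total (Precedes F) := hQ.precedes_total
  have : IsTrans _ (Precedes F) := hA.precedes_trans hQ
  rw [selfCounting_map_univ_iff]
  simp only [hQ.fiberCard_eq_lowerCardSum]
  exact lowerCardSum_eq_card_lt_add_card_le

lemma fiberCard_selectMax {n : ℕ} {β : Type*} [LinearOrder β] (c : Fin n → β) (z : Fin n) :
    fiberCard (selectMax c) z = #{w | c w < c z} + #{w | c w ≤ c z} := by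
  simp only [quasitrivial_selectMax.fiberCard_eq_lowerCardSum, lowerCardSum,
    precedes_selectMax_iff, ← lt_iff_le_not_ge]

section Monotone

variable {α β : Type*} [LinearOrder α] [Fintype α] [LocallyFiniteOrderBot α] [LinearOrder β]
  {c : α → β}

lemma Monotone.filter_lt_eq_Iio_min' (hc : Monotone c) (i : α)
    (h : ({j | c j = c i} : Finset α).Nonempty) :
    ({j | c j < c i} : Finset α) = Iio (({j | c j = c i} : Finset α).min' h) := by
  have hm := (mem_filter.1 (min'_mem _ h)).2
  ext j
  simp only [mem_filter, mem_univ, true_and, mem_Iio]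
  constructor
  · exact fun hj => lt_of_not_ge fun hmj => (hm ▸ hc hmj).not_gt hj
  · exact fun hj => (hm ▸ hc hj.le).lt_of_ne fun hji => (min'_le _ j (by simp [hji])).not_gt hj

lemma Monotone.filter_le_eq_Iic_max' (hc : Monotone c) (i : α)
    (h : ({j | c j = c i} : Finset α).Nonempty) :
    ({j | c j ≤ c i} : Finset α) = Iic (({j | c j = c i} : Finset α).max' h) := by
  have hM := (mem_filter.1 (max'_mem _ h)).2
  ext j
  simp only [mem_filter, mem_univ, true_and, mem_Iic]
  constructor
  · exact fun hj => le_of_not_gt fun hMj =>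
      (le_max' _ j (by simp [hj.antisymm (hM ▸ hc hMj.le)])).not_gt hMj
  · exact fun hj => hM ▸ hc hj

end Monotone

theorem stmt_12 {n : ℕ} (c : Fin n → ℕ) (hmono : Monotone c) :
    (∃ F : Fin n → Fin n → Fin n, Assoc F ∧ Quasitrivial F ∧
        Finset.univ.val.map (fun z => fiberCard F z) = Finset.univ.val.map c) ↔
      ∀ i : Fin n,
        c i = (((Finset.univ.filter (fun j => c j = c i)).min' ⟨i, by simp⟩ : Fin n) : ℕ) + 1
            + ((((Finset.univ.filter (fun j => c j = c i)).max' ⟨i, by simp⟩ : Fin n) : ℕ) + 1)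
            - 1 := by
  have hcount (i : Fin n) : c i = #{j | c j < c i} + #{j | c j ≤ c i} ↔
      c i = ((univ.filter (c · = c i)).min' ⟨i, by simp⟩ : ℕ) + 1
        + (((univ.filter (c · = c i)).max' ⟨i, by simp⟩ : ℕ) + 1) - 1 := by
    rw [hmono.filter_lt_eq_Iio_min' i ⟨i, by simp⟩, Fin.card_Iio,
      hmono.filter_le_eq_Iic_max' i ⟨i, by simp⟩, Fin.card_Iic]
    omega
  rw [← forall_congr' hcount]
  constructor
  · rintro ⟨F, hA, hQ, hmap⟩
    rw [← selfCounting_map_univ_iff, ← hmap]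
    exact selfCounting_fiberCard hA hQ
  · intro h
    refine ⟨selectMax c, assoc_selectMax, quasitrivial_selectMax,
      Multiset.map_congr rfl fun z _ => ?_⟩
    rw [fiberCard_selectMax, ← h z]
end

section
/- A weak ordering ≾ on a finite set X is 2-quasilinear (there are no pairwise distinct a,b,c,d with a ≺ b ∼ c ∼ d) if and only if there exists a total ordering ≤ on X for which ≾ is single-plateaued, i.e., for all a < b < c one has b ≺ a or b ≺ c or a ∼ b ∼ c. -/
/-!
Counting strictly smaller elements gives a rank `ρ : X → ℕ` with `x ≾ y ↔ ρ x ≤ ρ y` whose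
bottom level is `0`, so it suffices to treat weak orders pulled back from `ℕ`.

2-quasilinearity says exactly that every level other than the bottom one has at most two
elements. Given that, list the elements as a valley: the upper levels in decreasing order,
one element of each, then the whole bottom level, then the upper levels in increasing order,
the second element of each. Along this listing every non-bottom element lies strictly below
all elements further out, which is single-plateauedness. Conversely, if `a ≺ b ∼ c ∼ d`, two of
`b, c, d` lie on the same side of `a`, and single-plateauedness applied to `a` and these two
fails.
-/

/-- Strict part of a weak ordering `R`. -/
def SLT {X : Type*} (R : X → X → Prop) (x y : X) : Prop := R x y ∧ ¬ R y x

/-- Symmetric part of a weak ordering `R`. -/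
def SIM {X : Type*} (R : X → X → Prop) (x y : X) : Prop := R x y ∧ R y x

/-- A weak ordering is 2-quasilinear if there are no pairwise distinct `a,b,c,d`
with `a ≺ b ∼ c ∼ d`. -/
def TwoQuasilinear {X : Type*} (R : X → X → Prop) : Prop :=
  ¬ ∃ a b c d : X, (a ≠ b ∧ a ≠ c ∧ a ≠ d ∧ b ≠ c ∧ b ≠ d ∧ c ≠ d) ∧
      SLT R a b ∧ SIM R b c ∧ SIM R c d

/-- `R` is single-plateaued for the total ordering `le`. -/
def SinglePlateaued {X : Type*} (R : X → X → Prop) (le : X → X → Prop) : Prop :=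
  ∀ a b c : X, (le a b ∧ a ≠ b) → (le b c ∧ b ≠ c) →
    SLT R b a ∨ SLT R b c ∨ (SIM R a b ∧ SIM R b c)

open Function

section WeakOrder

variable {X : Type*} {R : X → X → Prop}

noncomputable def lowerRank (R : X → X → Prop) (x : X) : ℕ := {y | SLT R y x}.ncard

lemma lowerRank_le_lowerRank [Finite X] (htrans : Transitive R) {x y : X} (h : R x y) :
    lowerRank R x ≤ lowerRank R y :=
  Set.ncard_le_ncard (fun _ hz => ⟨htrans hz.1 h, fun hyz => hz.2 (htrans h hyz)⟩)

lemma lowerRank_lt_lowerRank [Finite X] (htrans : Transitive R) {x y : X} (h : SLT R x y) :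
    lowerRank R x < lowerRank R y := by
  refine Set.ncard_lt_ncard (ssubset_of_subset_not_subset
    (fun _ hz => ⟨htrans hz.1 h.1, fun hyz => hz.2 (htrans h.1 hyz)⟩) fun hsub => ?_)
  exact (hsub h).2 (hsub h).1

lemma rel_iff_lowerRank_le [Finite X] (htot : ∀ x y : X, R x y ∨ R y x) (htrans : Transitive R)
    {x y : X} : R x y ↔ lowerRank R x ≤ lowerRank R y := by
  refine ⟨lowerRank_le_lowerRank htrans, fun h => ?_⟩
  by_contra hxy
  exact (lowerRank_lt_lowerRank htrans ⟨(htot x y).resolve_left hxy, hxy⟩).not_ge h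

lemma exists_slt_of_lowerRank_ne_zero {x : X} (h : lowerRank R x ≠ 0) : ∃ y, SLT R y x :=
  Set.nonempty_of_ncard_ne_zero h

lemma SinglePlateaued.flip {le : X → X → Prop} (h : SinglePlateaued R le) :
    SinglePlateaued R (flip le) := by
  intro a b c hab hbc
  rcases h c b a ⟨hbc.1, hbc.2.symm⟩ ⟨hab.1, hab.2.symm⟩ with hb | hb | ⟨hcb, hba⟩
  · exact .inr (.inl hb)
  · exact .inl hb
  · exact .inr (.inr ⟨⟨hba.2, hba.1⟩, ⟨hcb.2, hcb.1⟩⟩)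

end WeakOrder

section Pullback

variable {X α : Type*} [LinearOrder α] {ρ : X → α}

@[simp]
lemma slt_comp_le_iff {x y : X} : SLT (fun a b => ρ a ≤ ρ b) x y ↔ ρ x < ρ y :=
  lt_iff_le_not_ge.symm

@[simp]
lemma sim_comp_le_iff {x y : X} : SIM (fun a b => ρ a ≤ ρ b) x y ↔ ρ x = ρ y :=
  le_antisymm_iff.symm

variable {le : X → X → Prop}

lemma SinglePlateaued.ne_of_lt_of_le_of_le (hsp : SinglePlateaued (fun a b => ρ a ≤ ρ b) le)
    {a u v : X} (hau : le a u) (huv : le u v) (huv' : u ≠ v) (hρ : ρ a < ρ u) : ρ u ≠ ρ v := by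
  intro heq
  have hau' : a ≠ u := by rintro rfl; exact hρ.false
  have := hsp a u v ⟨hau, hau'⟩ ⟨huv, huv'⟩
  simp only [slt_comp_le_iff, sim_comp_le_iff] at this
  rcases this with h | h | ⟨h, -⟩ <;> order

lemma SinglePlateaued.ne_of_same_side (hle : Std.Total le)
    (hsp : SinglePlateaued (fun a b => ρ a ≤ ρ b) le) {a u v : X} (hau : le a u) (hav : le a v)
    (huv : u ≠ v) (hu : ρ a < ρ u) (hv : ρ a < ρ v) : ρ u ≠ ρ v := by
  rcases hle.total u v with h | h
  · exact hsp.ne_of_lt_of_le_of_le hau h huv hu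
  · exact (hsp.ne_of_lt_of_le_of_le hav h huv.symm hv).symm

lemma twoQuasilinear_of_singlePlateaued (hle : Std.Total le)
    (hsp : SinglePlateaued (fun a b => ρ a ≤ ρ b) le) : TwoQuasilinear (fun a b => ρ a ≤ ρ b) := by
  rintro ⟨a, b, c, d, ⟨-, -, -, hbc, hbd, hcd⟩, hab, hbc', hcd'⟩
  simp only [slt_comp_le_iff, sim_comp_le_iff] at hab hbc' hcd'
  have hflip : Std.Total (flip le) := ⟨fun x y => hle.total y x⟩
  have hsame : ∀ {u v}, u ≠ v → ρ a < ρ u → ρ a < ρ v → ρ u = ρ v →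
      ¬ (le a u ∧ le a v) ∧ ¬ (le u a ∧ le v a) := fun huv hu hv heq =>
    ⟨fun h => hsp.ne_of_same_side hle h.1 h.2 huv hu hv heq,
      fun h => hsp.flip.ne_of_same_side hflip h.1 h.2 huv hu hv heq⟩
  have := hsame hbc hab (by order) hbc'
  have := hsame hbd hab (by order) (by order)
  have := hsame hcd (by order) (by order) hcd'
  have := hle.total a b
  have := hle.total a c
  have := hle.total a d
  tauto

end Pullback

section Valley

variable {X : Type*} {ρ : X → ℕ}

open Classical in
/-- The first coordinate of the position of `x` in the valley listing (ties broken by `ε`):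
the `ε`-later element of a level `n` sits at `n`, any other element at `-n`. -/
noncomputable def valleyKey (ρ ε : X → ℕ) (x : X) : ℤ :=
  if ∃ y, ρ y = ρ x ∧ ε y < ε x then ρ x else -ρ x

lemma natAbs_valleyKey (ε : X → ℕ) (x : X) : (valleyKey ρ ε x).natAbs = ρ x := by
  unfold valleyKey
  split_ifs <;> simp

lemma TwoQuasilinear.eq_zero_of_ne_of_ne_of_ne (hql : TwoQuasilinear (fun a b => ρ a ≤ ρ b))
    (h0 : ∀ x, ρ x ≠ 0 → ∃ y, ρ y < ρ x) {x y z : X} (hxy : x ≠ y) (hxz : x ≠ z) (hyz : y ≠ z)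
    (hy : ρ y = ρ x) (hz : ρ z = ρ x) : ρ x = 0 := by
  by_contra hx
  obtain ⟨a, ha⟩ := h0 x hx
  exact hql ⟨a, x, y, z, ⟨ne_of_apply_ne ρ (by omega), ne_of_apply_ne ρ (by omega),
    ne_of_apply_ne ρ (by omega), hxy, hxz, hyz⟩, slt_comp_le_iff.mpr ha,
    sim_comp_le_iff.mpr hy.symm, sim_comp_le_iff.mpr (hy.trans hz.symm)⟩

lemma valleyKey_injective_of_ne_zero {ε : X → ℕ} (hε : Injective ε)
    (hlevel : ∀ {x y z : X}, x ≠ y → x ≠ z → y ≠ z → ρ y = ρ x → ρ z = ρ x → ρ x = 0)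
    {x y : X} (hx : valleyKey ρ ε x ≠ 0) (hxy : valleyKey ρ ε x = valleyKey ρ ε y) : x = y := by
  have hρ : ρ y = ρ x := by simpa [natAbs_valleyKey] using congrArg Int.natAbs hxy.symm
  by_contra hne
  unfold valleyKey at hx hxy
  split_ifs at hx hxy with hX hY hY
  · obtain ⟨x', hx', hεx'⟩ := hX
    obtain ⟨y', hy', hεy'⟩ := hY
    have hpair : ∀ {z}, ρ z = ρ x → z = x ∨ z = y := by
      intro z hz
      by_contra! h
      exact hx (by simp [hlevel hne (Ne.symm h.1) (Ne.symm h.2) hρ hz])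
    obtain rfl : x' = y := (hpair hx').resolve_left (hε.ne_iff.mp hεx'.ne)
    obtain rfl : y' = x := (hpair (hy'.trans hρ)).resolve_right (hε.ne_iff.mp hεy'.ne)
    omega
  · omega
  · omega
  · rcases (hε.ne_iff.mpr hne).lt_or_gt with h | h
    · exact hY ⟨x, hρ.symm, h⟩
    · exact hX ⟨y, hρ, h⟩

lemma exists_singlePlateaued_of_twoQuasilinear [Finite X]
    (h0 : ∀ x, ρ x ≠ 0 → ∃ y, ρ y < ρ x) (hql : TwoQuasilinear (fun a b => ρ a ≤ ρ b)) :
    ∃ le : X → X → Prop, IsLinearOrder X le ∧ SinglePlateaued (fun a b => ρ a ≤ ρ b) le := by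
  obtain ⟨ε, hε⟩ := exists_injective_nat X
  set κ := valleyKey ρ ε
  let pos : X → ℤ ×ₗ ℕ := fun x => toLex (κ x, ε x)
  let := LinearOrder.lift' pos fun x y h => hε (congrArg (fun p => (ofLex p).2) h)
  refine ⟨(· ≤ ·), inferInstance, ?_⟩
  rintro a b c ⟨hab, hab'⟩ ⟨hbc, hbc'⟩
  have hκab : κ a ≤ κ b := Prod.Lex.monotone_fst (pos a) (pos b) hab
  have hκbc : κ b ≤ κ c := Prod.Lex.monotone_fst (pos b) (pos c) hbc
  have hinj : ∀ {x y}, κ x ≠ 0 → κ x = κ y → x = y :=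
    valleyKey_injective_of_ne_zero hε fun {_ _ _} => hql.eq_zero_of_ne_of_ne_of_ne h0
  have hstrict : κ b ≠ 0 → κ a < κ b ∧ κ b < κ c := fun hb =>
    ⟨hκab.lt_of_ne fun h => hab' (hinj (h ▸ hb) h),
      hκbc.lt_of_ne fun h => hbc' (hinj hb h)⟩
  have hρ : ∀ x, (κ x).natAbs = ρ x := natAbs_valleyKey ε
  simp only [slt_comp_le_iff, sim_comp_le_iff, ← hρ]
  -- `κ b = 0` is the bottom level; otherwise the sign of `κ b` says on which side `b` rises.
  omega

theorem twoQuasilinear_comp_le_iff [Finite X] (h0 : ∀ x, ρ x ≠ 0 → ∃ y, ρ y < ρ x) :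
    TwoQuasilinear (fun a b => ρ a ≤ ρ b) ↔
      ∃ le : X → X → Prop, IsLinearOrder X le ∧ SinglePlateaued (fun a b => ρ a ≤ ρ b) le :=
  ⟨exists_singlePlateaued_of_twoQuasilinear h0,
    fun ⟨_, hlin, hsp⟩ => twoQuasilinear_of_singlePlateaued hlin.toTotal hsp⟩

end Valley

theorem stmt_13 {X : Type*} [Finite X] (R : X → X → Prop)
    (htot : ∀ x y : X, R x y ∨ R y x) (htrans : Transitive R) :
    TwoQuasilinear R ↔
      ∃ le : X → X → Prop, IsLinearOrder X le ∧ SinglePlateaued R le := by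
  have hR : R = fun x y => lowerRank R x ≤ lowerRank R y :=
    funext fun _ => funext fun _ => propext (rel_iff_lowerRank_le htot htrans)
  have h0 : ∀ x, lowerRank R x ≠ 0 → ∃ y, lowerRank R y < lowerRank R x := fun _ hx =>
    (exists_slt_of_lowerRank_ne_zero hx).imp fun _ => lowerRank_lt_lowerRank htrans
  rw [hR]
  exact twoQuasilinear_comp_le_iff h0
end

section
/- Let p_op(n) denote the number of 2-quasilinear weak orderings on Xₙ, with p_op(0) = p_op(1) = 1. Then p_op(n+2) = 1 + (n+2)·p_op(n+1) + ½(n+2)(n+1)·p_op(n) for all n ≥ 1. -/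
def Good {X : Type*} (R : X → X → Prop) : Prop :=
  (∀ x y, R x y ∨ R y x) ∧ Transitive R ∧ TwoQuasilinear R

set_option linter.unusedSectionVars false
open scoped Classical

section Basic

variable {X Y : Type*}

/-- transport of relations along an equiv -/
def relMap (e : X ≃ Y) (R : X → X → Prop) : Y → Y → Prop :=
  fun x y => R (e.symm x) (e.symm y)

lemma relMap_symm_relMap (e : X ≃ Y) (R : X → X → Prop) :
    relMap e.symm (relMap e R) = R := by
  funext x y; simp [relMap]

lemma relMap_relMap_symm (e : X ≃ Y) (R : Y → Y → Prop) :
    relMap e (relMap e.symm R) = R := by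
  funext x y; simp [relMap]

lemma good_relMap (e : X ≃ Y) {R : X → X → Prop} (h : Good R) : Good (relMap e R) := by
  obtain ⟨htot, htr, hq⟩ := h
  refine ⟨fun x y => htot _ _, fun x y z hxy hyz => htr hxy hyz, ?_⟩
  rintro ⟨a, b, c, d, ⟨h1, h2, h3, h4, h5, h6⟩, hab, hbc, hcd⟩
  exact hq ⟨e.symm a, e.symm b, e.symm c, e.symm d,
    ⟨fun h => h1 (e.symm.injective h), fun h => h2 (e.symm.injective h),
     fun h => h3 (e.symm.injective h), fun h => h4 (e.symm.injective h),
     fun h => h5 (e.symm.injective h), fun h => h6 (e.symm.injective h)⟩,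
    hab, hbc, hcd⟩

/-- restriction of a relation to the complement of a finset -/
def restrictRel [DecidableEq X] (R : X → X → Prop) (s : Finset X) :
    {x : X // x ∉ s} → {x : X // x ∉ s} → Prop :=
  fun x y => R x.1 y.1

lemma good_restrict [DecidableEq X] {R : X → X → Prop} (h : Good R) (s : Finset X) :
    Good (restrictRel R s) := by
  obtain ⟨htot, htr, hq⟩ := h
  refine ⟨fun x y => htot _ _, fun x y z hxy hyz => htr hxy hyz, ?_⟩
  rintro ⟨a, b, c, d, ⟨h1, h2, h3, h4, h5, h6⟩, hab, hbc, hcd⟩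
  exact hq ⟨a.1, b.1, c.1, d.1,
    ⟨fun h => h1 (Subtype.ext h), fun h => h2 (Subtype.ext h),
     fun h => h3 (Subtype.ext h), fun h => h4 (Subtype.ext h),
     fun h => h5 (Subtype.ext h), fun h => h6 (Subtype.ext h)⟩,
    hab, hbc, hcd⟩

/-- extend a relation on the complement of `s` by putting `s` as top block -/
def extendRel [DecidableEq X] (s : Finset X)
    (R : {x : X // x ∉ s} → {x : X // x ∉ s} → Prop) : X → X → Prop :=
  fun x y => y ∈ s ∨ ∃ (hx : x ∉ s) (hy : y ∉ s), R ⟨x, hx⟩ ⟨y, hy⟩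

lemma restrict_extend [DecidableEq X] (s : Finset X)
    (R : {x : X // x ∉ s} → {x : X // x ∉ s} → Prop) :
    restrictRel (extendRel s R) s = R := by
  funext x y
  simp only [restrictRel, extendRel]
  apply propext
  constructor
  · rintro (h | ⟨hx, hy, h⟩)
    · exact absurd h y.2
    · exact h
  · intro h; exact Or.inr ⟨x.2, y.2, h⟩

lemma good_extend [DecidableEq X] {s : Finset X} (hcard : s.card ≤ 2)
    {R : {x : X // x ∉ s} → {x : X // x ∉ s} → Prop} (h : Good R) :
    Good (extendRel s R) := by
  obtain ⟨htot, htr, hq⟩ := h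
  refine ⟨?_, ?_, ?_⟩
  · intro x y
    by_cases hy : y ∈ s
    · exact Or.inl (Or.inl hy)
    · by_cases hx : x ∈ s
      · exact Or.inr (Or.inl hx)
      · rcases htot ⟨x, hx⟩ ⟨y, hy⟩ with h | h
        · exact Or.inl (Or.inr ⟨hx, hy, h⟩)
        · exact Or.inr (Or.inr ⟨hy, hx, h⟩)
  · rintro x y z (hxy | ⟨hx, hy, hxy⟩) hyz
    · rcases hyz with hz | ⟨hy, hz, _⟩
      · exact Or.inl hz
      · exact absurd hxy hy
    · rcases hyz with hz | ⟨hy', hz, hyz⟩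
      · exact Or.inl hz
      · exact Or.inr ⟨hx, hz, htr hxy hyz⟩
  · rintro ⟨a, b, c, d, ⟨h1, h2, h3, h4, h5, h6⟩, ⟨hab, hnba⟩, ⟨hbc, hcb⟩, ⟨hcd, hdc⟩⟩
    by_cases hb : b ∈ s
    · -- then c, d ∈ s, so s has ≥ 3 elements
      have hc : c ∈ s := by
        rcases hbc with h | ⟨hb', _, _⟩
        · exact h
        · exact absurd hb hb'
      have hd : d ∈ s := by
        rcases hcd with h | ⟨hc', _, _⟩
        · exact h
        · exact absurd hc hc'
      have : ({b, c, d} : Finset X) ⊆ s := by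
        intro x hx
        simp only [Finset.mem_insert, Finset.mem_singleton] at hx
        rcases hx with rfl | rfl | rfl <;> assumption
      have h3card : ({b, c, d} : Finset X).card = 3 := by
        rw [Finset.card_insert_of_notMem, Finset.card_insert_of_notMem,
          Finset.card_singleton] <;> simp [h4, h5, h6]
      have := Finset.card_le_card this
      omega
    · -- all of a,b,c,d outside s
      have hc : c ∉ s := by
        rcases hcb with h | ⟨hc', _, _⟩
        · exact absurd h hb
        · exact hc'
      have hd : d ∉ s := by
        rcases hdc with h | ⟨hd', _, _⟩
        · exact absurd h hc
        · exact hd'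
      have ha : a ∉ s := by
        intro ha
        exact hnba (Or.inl ha)
      have hab' : R ⟨a, ha⟩ ⟨b, hb⟩ := by
        rcases hab with h | ⟨_, _, h⟩
        · exact absurd h hb
        · exact h
      have hbc' : R ⟨b, hb⟩ ⟨c, hc⟩ := by
        rcases hbc with h | ⟨_, _, h⟩
        · exact absurd h hc
        · exact h
      have hcb' : R ⟨c, hc⟩ ⟨b, hb⟩ := by
        rcases hcb with h | ⟨_, _, h⟩
        · exact absurd h hb
        · exact h
      have hcd' : R ⟨c, hc⟩ ⟨d, hd⟩ := by
        rcases hcd with h | ⟨_, _, h⟩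
        · exact absurd h hd
        · exact h
      have hdc' : R ⟨d, hd⟩ ⟨c, hc⟩ := by
        rcases hdc with h | ⟨_, _, h⟩
        · exact absurd h hc
        · exact h
      have hnba' : ¬ R ⟨b, hb⟩ ⟨a, ha⟩ := fun h => hnba (Or.inr ⟨hb, ha, h⟩)
      exact hq ⟨⟨a, ha⟩, ⟨b, hb⟩, ⟨c, hc⟩, ⟨d, hd⟩,
        ⟨fun h => h1 (congrArg Subtype.val h), fun h => h2 (congrArg Subtype.val h),
         fun h => h3 (congrArg Subtype.val h), fun h => h4 (congrArg Subtype.val h),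
         fun h => h5 (congrArg Subtype.val h), fun h => h6 (congrArg Subtype.val h)⟩,
        ⟨hab', hnba'⟩, ⟨hbc', hcb'⟩, ⟨hcd', hdc'⟩⟩

end Basic

section Top

variable {X : Type*} [Fintype X] [DecidableEq X]

lemma exists_max {R : X → X → Prop} (htot : ∀ x y, R x y ∨ R y x)
    (htr : Transitive R) (s : Finset X) (hs : s.Nonempty) :
    ∃ x ∈ s, ∀ y ∈ s, R y x := by
  induction s using Finset.cons_induction with
  | empty => simp at hs
  | cons a t ha ih =>
    rcases t.eq_empty_or_nonempty with rfl | ht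
    · refine ⟨a, Finset.mem_cons_self a _, ?_⟩
      intro y hy
      simp only [Finset.cons_empty, Finset.mem_singleton] at hy
      subst hy
      rcases htot y y with h | h <;> exact h
    · obtain ⟨x, hx, hmax⟩ := ih ht
      rcases htot a x with h | h
      · refine ⟨x, Finset.mem_cons.mpr (Or.inr hx), ?_⟩
        intro y hy
        rcases Finset.mem_cons.mp hy with rfl | hy
        · exact h
        · exact hmax y hy
      · refine ⟨a, Finset.mem_cons_self a _, ?_⟩
        intro y hy
        rcases Finset.mem_cons.mp hy with rfl | hy
        · rcases htot y y with h' | h' <;> exact h'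
        · exact htr (hmax y hy) h

/-- the top block of a relation -/
noncomputable def topF (R : X → X → Prop) : Finset X :=
  Finset.univ.filter fun x => ∀ y, R y x

lemma mem_topF {R : X → X → Prop} {x : X} : x ∈ topF R ↔ ∀ y, R y x := by
  simp [topF]

lemma topF_nonempty [Nonempty X] {R : X → X → Prop} (h : Good R) :
    (topF R).Nonempty := by
  obtain ⟨x, _, hmax⟩ := exists_max h.1 h.2.1 Finset.univ Finset.univ_nonempty
  exact ⟨x, mem_topF.mpr fun y => hmax y (Finset.mem_univ y)⟩

lemma topF_extend {s : Finset X} (hs : s.Nonempty)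
    (R : {x : X // x ∉ s} → {x : X // x ∉ s} → Prop) :
    topF (extendRel s R) = s := by
  ext x
  rw [mem_topF]
  constructor
  · intro h
    obtain ⟨y, hy⟩ := hs
    rcases h y with hx | ⟨hy', _, _⟩
    · exact hx
    · exact absurd hy hy'
  · intro hx y
    exact Or.inl hx

lemma eq_extend {R : X → X → Prop} (h : Good R) :
    extendRel (topF R) (restrictRel R (topF R)) = R := by
  funext x y
  apply propext
  simp only [extendRel, restrictRel]
  constructor
  · rintro (hy | ⟨_, _, h'⟩)
    · exact mem_topF.mp hy x
    · exact h'
  · intro hxy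
    by_cases hy : y ∈ topF R
    · exact Or.inl hy
    · have hx : x ∉ topF R := by
        intro hx
        apply hy
        rw [mem_topF] at hx ⊢
        intro w
        exact h.2.1 (hx w) hxy
      exact Or.inr ⟨hx, hy, hxy⟩

lemma topF_card_le_two {R : X → X → Prop} (h : Good R) (hne : topF R ≠ Finset.univ) :
    (topF R).card ≤ 2 := by
  by_contra hcard
  push_neg at hcard
  obtain ⟨t, hts, htc⟩ := Finset.exists_subset_card_eq (show 3 ≤ (topF R).card by omega)
  obtain ⟨x, y, z, hxy, hxz, hyz, rfl⟩ := Finset.card_eq_three.mp htc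
  -- an element not in topF
  obtain ⟨a, ha⟩ : ∃ a, a ∉ topF R := by
    by_contra hall
    push_neg at hall
    exact hne (Finset.eq_univ_iff_forall.mpr hall)
  have hx := hts (show x ∈ ({x, y, z} : Finset X) by simp)
  have hy := hts (show y ∈ ({x, y, z} : Finset X) by simp)
  have hz := hts (show z ∈ ({x, y, z} : Finset X) by simp)
  rw [mem_topF] at hx hy hz
  have hax : a ≠ x := fun h' => ha (h' ▸ mem_topF.mpr hx)
  have hay : a ≠ y := fun h' => ha (h' ▸ mem_topF.mpr hy)
  have haz : a ≠ z := fun h' => ha (h' ▸ mem_topF.mpr hz)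
  have hnxa : ¬ R x a := by
    intro hxa
    apply ha
    rw [mem_topF]
    intro w
    exact h.2.1 (hx w) hxa
  exact h.2.2 ⟨a, x, y, z, ⟨hax, hay, haz, hxy, hxz, hyz⟩,
    ⟨hx a, hnxa⟩, ⟨hy x, hx y⟩, ⟨hz y, hy z⟩⟩

lemma good_top : Good (fun _ _ : X => True) := by
  refine ⟨fun _ _ => Or.inl trivial, fun _ _ _ _ _ => trivial, ?_⟩
  rintro ⟨a, b, c, d, _, ⟨_, hnba⟩, _, _⟩
  exact hnba trivial

lemma topF_top : topF (fun _ _ : X => True) = Finset.univ := by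
  ext x; simp [mem_topF]

lemma eq_top_of_topF_univ {R : X → X → Prop} (h : topF R = Finset.univ) :
    R = fun _ _ => True := by
  funext x y
  apply propext
  simp only [iff_true]
  have : y ∈ topF R := h ▸ Finset.mem_univ y
  exact mem_topF.mp this x

end Top

section Count

/-- the type of good orderings on `Fin m` -/
abbrev OT (m : ℕ) := {R : Fin m → Fin m → Prop // Good R}

noncomputable def eqvCompl {m : ℕ} (s : Finset (Fin m)) (k : ℕ) (h : m - s.card = k) :
    {x : Fin m // x ∉ s} ≃ Fin k :=
  Fintype.equivFinOfCardEq (by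
    rw [← h]
    rw [Fintype.card_subtype_compl]
    simp)

noncomputable def psi (n : ℕ) :
    Unit ⊕ (Fin (n+2) × OT (n+1)) ⊕ ({s : Finset (Fin (n+2)) // s.card = 2} × OT n) →
      OT (n+2)
  | .inl _ => ⟨fun _ _ => True, good_top⟩
  | .inr (.inl (a, R)) =>
      ⟨extendRel {a} (relMap (eqvCompl {a} (n+1) (by simp)).symm R.1),
        good_extend (by simp) (good_relMap _ R.2)⟩
  | .inr (.inr (s, R)) =>
      ⟨extendRel s.1 (relMap (eqvCompl s.1 n (by omega)).symm R.1),
        good_extend (le_of_eq s.2) (good_relMap _ R.2)⟩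

lemma topF_psi_inl (n : ℕ) : topF ((psi n (.inl ())).1) = Finset.univ := by
  show topF (fun _ _ => True) = Finset.univ
  exact topF_top

lemma topF_psi_inr_inl (n : ℕ) (a : Fin (n+2)) (R : OT (n+1)) :
    topF ((psi n (.inr (.inl (a, R)))).1) = {a} :=
  topF_extend (Finset.singleton_nonempty a) _

lemma topF_psi_inr_inr (n : ℕ) (s : {s : Finset (Fin (n+2)) // s.card = 2}) (R : OT n) :
    topF ((psi n (.inr (.inr (s, R)))).1) = s.1 :=
  topF_extend (Finset.card_pos.mp (by rw [s.2]; norm_num)) _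

lemma psi_inj (n : ℕ) (hn : 1 ≤ n) : Function.Injective (psi n) := by
  intro u v huv
  have ht : topF ((psi n u).1) = topF ((psi n v).1) := by rw [huv]
  match u, v with
  | .inl (), .inl () => rfl
  | .inl (), .inr (.inl (a, R)) =>
    rw [topF_psi_inl, topF_psi_inr_inl] at ht
    have := congrArg Finset.card ht
    simp at this
  | .inl (), .inr (.inr (s, R)) =>
    rw [topF_psi_inl, topF_psi_inr_inr, ] at ht
    have := congrArg Finset.card ht
    rw [Finset.card_univ, Fintype.card_fin, s.2] at this
    omega
  | .inr (.inl (a, R)), .inl () =>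
    rw [topF_psi_inl, topF_psi_inr_inl] at ht
    have := congrArg Finset.card ht
    simp at this
  | .inr (.inr (s, R)), .inl () =>
    rw [topF_psi_inl, topF_psi_inr_inr] at ht
    have := congrArg Finset.card ht
    rw [Finset.card_univ, Fintype.card_fin, s.2] at this
    omega
  | .inr (.inl (a, R)), .inr (.inr (s, R'))  =>
    rw [topF_psi_inr_inl, topF_psi_inr_inr] at ht
    have := congrArg Finset.card ht
    rw [Finset.card_singleton, s.2] at this
    omega
  | .inr (.inr (s, R')), .inr (.inl (a, R)) =>
    rw [topF_psi_inr_inl, topF_psi_inr_inr] at ht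
    have := congrArg Finset.card ht
    rw [Finset.card_singleton, s.2] at this
    omega
  | .inr (.inl (a, R)), .inr (.inl (a', R')) =>
    rw [topF_psi_inr_inl, topF_psi_inr_inl] at ht
    have haa : a = a' := Finset.singleton_injective ht
    subst haa
    have hval := congrArg Subtype.val huv
    have hM := congrArg (fun r => restrictRel r ({a} : Finset (Fin (n+2)))) hval
    simp only [psi] at hM
    rw [restrict_extend, restrict_extend] at hM
    have hR := congrArg (relMap (eqvCompl ({a} : Finset (Fin (n+2))) (n+1) (by simp))) hM
    rw [relMap_relMap_symm, relMap_relMap_symm] at hR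
    rw [Subtype.ext hR]
  | .inr (.inr (s, R)), .inr (.inr (s', R')) =>
    rw [topF_psi_inr_inr, topF_psi_inr_inr] at ht
    have hss : s = s' := Subtype.ext ht
    subst hss
    have hval := congrArg Subtype.val huv
    have hM := congrArg (fun r => restrictRel r s.1) hval
    simp only [psi] at hM
    rw [restrict_extend, restrict_extend] at hM
    have hR := congrArg (relMap (eqvCompl s.1 n (by omega))) hM
    rw [relMap_relMap_symm, relMap_relMap_symm] at hR
    rw [Subtype.ext hR]

lemma psi_surj (n : ℕ) : Function.Surjective (psi n) := by
  rintro ⟨R, hR⟩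
  by_cases hu : topF R = Finset.univ
  · refine ⟨.inl (), ?_⟩
    apply Subtype.ext
    exact (eq_top_of_topF_univ hu).symm
  · have hne : (topF R).Nonempty := topF_nonempty hR
    have hle : (topF R).card ≤ 2 := topF_card_le_two hR hu
    have hpos : 1 ≤ (topF R).card := Finset.card_pos.mpr hne
    interval_cases h : (topF R).card
    · -- card 1
      obtain ⟨a, ha⟩ := Finset.card_eq_one.mp h
      refine ⟨.inr (.inl (a, ⟨relMap (eqvCompl ({a} : Finset (Fin (n+2))) (n+1) (by simp))
        (restrictRel R {a}), good_relMap _ (good_restrict hR _)⟩)), ?_⟩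
      apply Subtype.ext
      show extendRel {a} (relMap _ (relMap _ (restrictRel R {a}))) = R
      rw [relMap_symm_relMap]
      rw [← ha]
      exact eq_extend hR
    · -- card 2
      refine ⟨.inr (.inr (⟨topF R, h⟩, ⟨relMap (eqvCompl (topF R) n (by omega))
        (restrictRel R (topF R)), good_relMap _ (good_restrict hR _)⟩)), ?_⟩
      apply Subtype.ext
      show extendRel (topF R) (relMap _ (relMap _ (restrictRel R (topF R)))) = R
      rw [relMap_symm_relMap]
      exact eq_extend hR

lemma card_OT_rec (n : ℕ) (hn : 1 ≤ n) :
    Nat.card (OT (n+2)) =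
      1 + (n+2) * Nat.card (OT (n+1)) + (n+2) * (n+1) / 2 * Nat.card (OT n) := by
  have hb : Function.Bijective (psi n) := ⟨psi_inj n hn, psi_surj n⟩
  rw [← Nat.card_eq_of_bijective (psi n) hb]
  rw [Nat.card_sum, Nat.card_sum, Nat.card_prod, Nat.card_prod]
  have h1 : Nat.card Unit = 1 := Nat.card_unique
  have h2 : Nat.card (Fin (n+2)) = n + 2 := by simp
  have h3 : Nat.card {s : Finset (Fin (n+2)) // s.card = 2} = (n+2) * (n+1) / 2 := by
    rw [Nat.card_eq_fintype_card]
    rw [Fintype.card_finset_len]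
    rw [Fintype.card_fin, Nat.choose_two_right]
    rfl
  rw [h1, h2, h3]
  exact (add_assoc 1 _ _).symm

lemma card_OT_zero : Nat.card (OT 0) = 1 := by
  rw [Nat.card_eq_one_iff_unique]
  constructor
  · constructor
    intro R R'
    apply Subtype.ext
    funext x
    exact x.elim0
  · exact ⟨⟨fun _ _ => True, good_top⟩⟩

lemma card_OT_one : Nat.card (OT 1) = 1 := by
  rw [Nat.card_eq_one_iff_unique]
  constructor
  · constructor
    intro R R'
    apply Subtype.ext
    funext x y
    apply propext
    have hx : ∀ (S : OT 1) (x y : Fin 1), S.1 x y := by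
      intro S x y
      have : x = y := Subsingleton.elim x y
      subst this
      rcases S.2.1 x x with h | h <;> exact h
    exact ⟨fun _ => hx R' x y, fun _ => hx R x y⟩
  · exact ⟨⟨fun _ _ => True, good_top⟩⟩

end Count

theorem stmt_15 (p : ℕ → ℕ)
    (hp : ∀ n, p n = Nat.card {R : Fin n → Fin n → Prop //
      (∀ x y, R x y ∨ R y x) ∧ Transitive R ∧ TwoQuasilinear R}) :
    p 0 = 1 ∧ p 1 = 1 ∧
      ∀ n, 1 ≤ n →
        p (n + 2) = 1 + (n + 2) * p (n + 1) + (n + 2) * (n + 1) / 2 * p n := by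
  have hp' : ∀ n, p n = Nat.card (OT n) := fun n => hp n
  refine ⟨by rw [hp' 0]; exact card_OT_zero, by rw [hp' 1]; exact card_OT_one, ?_⟩
  intro n hn
  rw [hp' (n+2), hp' (n+1), hp' n]
  exact card_OT_rec n hn
end

section
/- The number s_op(n) of 2-quasilinear weak orderings on Xₙ counted up to isomorphism equals F_{n+2} − 1, where F_m is the m-th Fibonacci number; equivalently, the number of compositions (n₁,…,n_k) of n with n₂,…,n_k ∈ {1,2} equals F_{n+2} − 1. -/
/-- 2-quasilinear weak orderings on `Fin n`. -/
def TwoQLWeakOrd (n : ℕ) : Type :=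
  {R : Fin n → Fin n → Prop // (∀ x y, R x y ∨ R y x) ∧ Transitive R ∧ TwoQuasilinear R}

/-- Two weak orderings are isomorphic if some bijection carries one to the other. -/
def isoRel (n : ℕ) (R S : TwoQLWeakOrd n) : Prop :=
  ∃ φ : Fin n ≃ Fin n, ∀ x y : Fin n, S.1 x y ↔ R.1 (φ x) (φ y)

/-!
A weak ordering `≼` on a finite set is determined up to isomorphism by the set of values of its
rank function `x ↦ #{y | y ≺ x}`. These values are the partial sums `n₁ + ⋯ + nᵢ` (`i < k`) of the
class sizes, so two weak orderings with the same rank set have rank fibres of equal sizes, and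
any rank-preserving bijection is an isomorphism. With `n` adjoined, the rank sets of weak
orderings on `Fin n` are exactly the boundary sets of compositions of `n`, and the weak ordering
is 2-quasilinear iff every block after the first has size `1` or `2`. Such a composition is a first block `n - k`
followed by a composition of `k < n` into parts `1` and `2`; there are `F (k + 1)` of the latter,
and `∑_{k<n} F (k + 1) = F (n + 2) - 1`.
-/

open Finset

structure IsWeakOrdering {X : Type*} (R : X → X → Prop) : Prop where
  total : ∀ x y, R x y ∨ R y x
  trans : ∀ {x y z}, R x y → R y z → R x z

lemma IsWeakOrdering.refl {X : Type*} {R : X → X → Prop} (hR : IsWeakOrdering R) (x : X) :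
    R x x :=
  (hR.total x x).elim id id

lemma Finset.card_filter_eq_eq_sub {Z : Type*} [Fintype Z] (f : Z → ℕ) (r : ℕ) :
    #{z | f z = r} = #{z | f z < r + 1} - #{z | f z < r} := by
  classical
  rw [eq_tsub_iff_add_eq_of_le (card_le_card (monotone_filter_right _ fun z _ h => by omega)),
    ← card_union_of_disjoint (disjoint_filter.2 fun z _ h => by omega), ← filter_or]
  congr 1
  ext z
  simp only [mem_filter_univ]
  omega

namespace WeakOrdering

open scoped Classical

variable {X Y : Type*} [Fintype X] [Fintype Y] {R : X → X → Prop} {S : Y → Y → Prop}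

noncomputable def rank (R : X → X → Prop) (x : X) : ℕ := #{y | SLT R y x}

lemma rank_lt_rank_iff (hR : IsWeakOrdering R) {x y : X} : rank R x < rank R y ↔ SLT R x y := by
  have below_mono {x y} (hxy : R x y) :
      ({z | SLT R z x} : Finset X) ⊆ ({z | SLT R z y} : Finset X) :=
    monotone_filter_right _ fun z _ hz => ⟨hR.trans hz.1 hxy, fun hyz => hz.2 (hR.trans hxy hyz)⟩
  constructor
  · intro hlt
    refine ⟨(hR.total x y).resolve_right fun hyx => ?_, fun hyx => ?_⟩ <;>
      exact hlt.not_ge (card_le_card (below_mono hyx))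
  · intro hxy
    refine card_lt_card ⟨below_mono hxy.1, fun hsub => ?_⟩
    have hx : x ∈ ({z | SLT R z y} : Finset X) := by simpa using hxy
    exact (mem_filter.1 (hsub hx)).2.2 (hR.refl x)

lemma rel_iff_rank_le (hR : IsWeakOrdering R) {x y : X} : R x y ↔ rank R x ≤ rank R y := by
  rw [← not_lt, rank_lt_rank_iff hR, SLT, not_and_not_right]
  exact ⟨fun hxy _ => hxy, fun h => (hR.total x y).elim id h⟩

lemma rank_lt_card (R : X → X → Prop) (x : X) : rank R x < Fintype.card X :=
  card_lt_univ_of_notMem fun hx => (mem_filter.1 hx).2.2 (mem_filter.1 hx).2.1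

lemma card_rank_lt_rank (hR : IsWeakOrdering R) (x : X) :
    #{y | rank R y < rank R x} = rank R x := by
  simp_rw [rank_lt_rank_iff hR]
  rfl

noncomputable def rankSet (R : X → X → Prop) : Finset ℕ := univ.image (rank R)

lemma card_rank_lt_eq_min' (hR : IsWeakOrdering R) {t : ℕ}
    (hB : ((insert (Fintype.card X) (rankSet R)).filter (t ≤ ·)).Nonempty) :
    #{y | rank R y < t} = ((insert (Fintype.card X) (rankSet R)).filter (t ≤ ·)).min' hB := by
  set B := (insert (Fintype.card X) (rankSet R)).filter (t ≤ ·)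
  have hm : B.min' hB ∈ B := min'_mem _ _
  have no_rank_between : ∀ y, t ≤ rank R y → B.min' hB ≤ rank R y :=
    fun y hy => min'_le _ _ (mem_filter.2 ⟨mem_insert_of_mem (mem_image_of_mem _ (mem_univ y)), hy⟩)
  have hfilter : ({y | rank R y < t} : Finset X) = ({y | rank R y < B.min' hB} : Finset X) := by
    ext y
    simp only [mem_filter_univ]
    exact ⟨fun h => h.trans_le (mem_filter.1 hm).2,
      fun h => not_le.1 fun hty => (no_rank_between y hty).not_gt h⟩
  rw [hfilter]
  rcases mem_insert.1 (mem_filter.1 hm).1 with h | h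
  · rw [h, filter_true_of_mem fun y _ => rank_lt_card R y, card_univ]
  · obtain ⟨x, -, hx⟩ := mem_image.1 h
    rw [← hx, card_rank_lt_rank hR]

lemma card_rank_lt_eq_of_rankSet_eq (hR : IsWeakOrdering R) (hS : IsWeakOrdering S)
    (hcard : Fintype.card X = Fintype.card Y) (h : rankSet R = rankSet S) (t : ℕ) :
    #{x | rank R x < t} = #{y | rank S y < t} := by
  by_cases hB : ((insert (Fintype.card X) (rankSet R)).filter (t ≤ ·)).Nonempty
  · have hB' : ((insert (Fintype.card Y) (rankSet S)).filter (t ≤ ·)).Nonempty := by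
      rwa [← hcard, ← h]
    rw [card_rank_lt_eq_min' hR hB, card_rank_lt_eq_min' hS hB']
    simp only [hcard, h]
  · have ht : Fintype.card X < t := by
      by_contra! ht
      exact hB ⟨_, mem_filter.2 ⟨mem_insert_self _ _, ht⟩⟩
    rw [filter_true_of_mem fun x _ => (rank_lt_card R x).trans ht,
      filter_true_of_mem fun y _ => (rank_lt_card S y).trans (hcard ▸ ht), card_univ, card_univ,
      hcard]

lemma exists_equiv_of_rankSet_eq (hR : IsWeakOrdering R) (hS : IsWeakOrdering S)
    (hcard : Fintype.card X = Fintype.card Y) (h : rankSet R = rankSet S) :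
    ∃ φ : Y ≃ X, ∀ y y', S y y' ↔ R (φ y) (φ y') := by
  have hfiber : ∀ r, Fintype.card {y // rank S y = r} = Fintype.card {x // rank R x = r} := by
    intro r
    simp only [Fintype.card_subtype, card_filter_eq_eq_sub,
      card_rank_lt_eq_of_rankSet_eq hR hS hcard h]
  let φ : Y ≃ X := Equiv.ofFiberEquiv fun r => Fintype.equivOfCardEq (hfiber r)
  refine ⟨φ, fun y y' => ?_⟩
  rw [rel_iff_rank_le hS, rel_iff_rank_le hR, Equiv.ofFiberEquiv_map (g := rank R),
    Equiv.ofFiberEquiv_map (g := rank R)]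

lemma rank_eq_of_equiv (φ : Y ≃ X) (h : ∀ y y', S y y' ↔ R (φ y) (φ y')) (y : Y) :
    rank S y = rank R (φ y) :=
  card_equiv φ fun z => by rw [mem_filter_univ, mem_filter_univ, SLT, SLT, h, h]

lemma rankSet_eq_of_equiv (φ : Y ≃ X) (h : ∀ y y', S y y' ↔ R (φ y) (φ y')) :
    rankSet S = rankSet R := by
  rw [rankSet, rankSet, ← image_univ_equiv φ, image_image]
  exact image_congr fun y _ => rank_eq_of_equiv φ h y

lemma lt_card_of_mem_rankSet {v : ℕ} (hv : v ∈ rankSet R) : v < Fintype.card X := by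
  obtain ⟨x, -, rfl⟩ := mem_image.1 hv
  exact rank_lt_card R x

lemma zero_mem_rankSet (hR : IsWeakOrdering R) [Nonempty X] : 0 ∈ rankSet R := by
  obtain ⟨x, -, hmin⟩ := exists_min_image univ (rank R) univ_nonempty
  refine mem_image.2 ⟨x, mem_univ x, Nat.eq_zero_of_not_pos fun hpos => ?_⟩
  obtain ⟨y, hy⟩ := card_pos.1 hpos
  exact ((rank_lt_rank_iff hR).2 (mem_filter.1 hy).2).not_ge (hmin y (mem_univ y))

end WeakOrdering

open WeakOrdering

lemma TwoQuasilinear.comap {X Y : Type*} {R : X → X → Prop} {S : Y → Y → Prop} {f : Y → X}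
    (hf : Function.Injective f) (h : ∀ y y', S y y' ↔ R (f y) (f y')) (hR : TwoQuasilinear R) :
    TwoQuasilinear S := by
  obtain rfl : S = fun y y' => R (f y) (f y') := funext₂ fun y y' => propext (h y y')
  rintro ⟨a, b, c, d, ⟨hab, hac, had, hbc, hbd, hcd⟩, hlt, hbc', hcd'⟩
  exact hR ⟨f a, f b, f c, f d, ⟨hf.ne hab, hf.ne hac, hf.ne had, hf.ne hbc, hf.ne hbd,
    hf.ne hcd⟩, hlt, hbc', hcd'⟩

namespace Composition

variable {n : ℕ} (c : Composition n)

def blockRel (x y : Fin n) : Prop := c.index x ≤ c.index y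

lemma isWeakOrdering_blockRel : IsWeakOrdering c.blockRel :=
  ⟨fun _ _ => le_total _ _, le_trans⟩

lemma index_lt_iff {x : Fin n} {j : ℕ} : (c.index x : ℕ) < j ↔ (x : ℕ) < c.sizeUpTo j := by
  refine ⟨fun h => (c.lt_sizeUpTo_index_succ x).trans_le (c.monotone_sizeUpTo h), fun h => ?_⟩
  by_contra! hj
  exact ((c.monotone_sizeUpTo hj).trans (c.sizeUpTo_index_le x)).not_gt h

lemma rank_blockRel (x : Fin n) : rank c.blockRel x = c.sizeUpTo (c.index x) := by
  have hslt : ∀ y, SLT c.blockRel y x ↔ (y : ℕ) < c.sizeUpTo (c.index x) := fun y => by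
    rw [← index_lt_iff, SLT, blockRel, blockRel, ← lt_iff_le_not_ge, Fin.lt_def]
  simp only [rank, hslt, Fin.card_filter_val_lt, min_eq_right (c.sizeUpTo_le _)]

lemma index_surjective : Function.Surjective c.index := fun j =>
  ⟨c.embedding j ⟨0, c.one_le_blocksFun j⟩, c.index_embedding _ _⟩

lemma rankSet_blockRel : rankSet c.blockRel = univ.image fun j : Fin c.length => c.sizeUpTo j := by
  rw [rankSet, ← image_univ_of_surjective c.index_surjective, image_image]
  exact image_congr fun x _ => c.rank_blockRel x

lemma mem_boundaries_iff (i : Fin (n + 1)) :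
    i ∈ c.boundaries ↔ (i : ℕ) ∈ insert n (rankSet c.blockRel) := by
  simp only [boundaries, mem_map, mem_univ, true_and, RelEmbedding.coe_toEmbedding,
    Fin.exists_fin_succ', boundary_last, rankSet_blockRel, mem_insert, mem_image, or_comm]
  refine or_congr (by rw [eq_comm, Fin.ext_iff, Fin.val_last]) (exists_congr fun j => ?_)
  rw [Fin.ext_iff]
  rfl

lemma eq_of_rankSet_blockRel_eq {c c' : Composition n}
    (h : rankSet c.blockRel = rankSet c'.blockRel) : c = c' := by
  have hb : c.boundaries = c'.boundaries := by
    ext i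
    rw [mem_boundaries_iff, mem_boundaries_iff, h]
  exact (compositionEquiv n).injective (CompositionAsSet.ext hb)

lemma exists_rankSet_blockRel_eq (I : Finset ℕ) (hI : ∀ v ∈ I, v < n) (h0 : n = 0 ∨ 0 ∈ I) :
    ∃ c : Composition n, rankSet c.blockRel = I := by
  let d : CompositionAsSet n :=
    { boundaries := {i | (i : ℕ) ∈ insert n I}
      zero_mem := by simpa [eq_comm] using h0
      getLast_mem := by simp }
  refine ⟨d.toComposition, ext fun v => ?_⟩
  by_cases hv : v < n
  · have hmem := d.toComposition.mem_boundaries_iff ⟨v, by omega⟩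
    rw [CompositionAsSet.toComposition_boundaries] at hmem
    simpa [d, hv.ne] using hmem.symm
  · refine iff_of_false (fun h => hv ?_) (fun h => hv (hI v h))
    simpa using lt_card_of_mem_rankSet h

lemma card_index_eq (j : Fin c.length) : #{x | c.index x = j} = c.blocksFun j := by
  have : ({x | c.index x = j} : Finset (Fin n)) = univ.map (c.embedding j).toEmbedding := by
    ext x
    rw [mem_filter_univ, eq_comm, ← mem_range_embedding_iff']
    simp [Set.mem_range]
  rw [this, card_map, card_univ, Fintype.card_fin]

lemma mem_blocks_tail_iff {b : ℕ} :
    b ∈ c.blocks.tail ↔ ∃ j : Fin c.length, 0 < (j : ℕ) ∧ c.blocksFun j = b := by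
  rw [List.mem_iff_getElem]
  constructor
  · rintro ⟨i, hi, rfl⟩
    have hi' : i + 1 < c.length := by
      rw [List.length_tail] at hi
      exact Nat.add_lt_of_lt_sub hi
    exact ⟨⟨i + 1, hi'⟩, i.succ_pos, (List.getElem_tail hi).symm⟩
  · rintro ⟨⟨j, hj⟩, hj0, rfl⟩
    obtain ⟨i, rfl⟩ : ∃ i, j = i + 1 := ⟨j - 1, by simp only at hj0; omega⟩
    exact ⟨i, by rw [List.length_tail]; exact Nat.lt_sub_of_add_lt hj, List.getElem_tail _⟩

lemma twoQuasilinear_blockRel_iff :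
    TwoQuasilinear c.blockRel ↔ ∀ b ∈ c.blocks.tail, b = 1 ∨ b = 2 := by
  constructor
  · intro hQ b hb
    obtain ⟨j, hj0, rfl⟩ := c.mem_blocks_tail_iff.1 hb
    by_contra hne
    have h3 : 2 < #{x | c.index x = j} := by
      have := c.one_le_blocksFun j
      rw [card_index_eq]
      omega
    obtain ⟨x, hx, y, hy, z, hz, hxy, hxz, hyz⟩ := two_lt_card.1 h3
    simp only [mem_filter_univ] at hx hy hz
    obtain ⟨a, ha⟩ := c.index_surjective ⟨0, by omega⟩
    have hlt : c.index a < j := by rw [ha, Fin.lt_def]; exact hj0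
    have hne : ∀ w, c.index w = j → a ≠ w := fun w hw haw => hlt.ne (haw ▸ hw)
    refine hQ ⟨a, x, y, z, ⟨hne x hx, hne y hy, hne z hz, hxy, hxz, hyz⟩, ?_, ?_, ?_⟩
    · rw [SLT, blockRel, blockRel, hx, ← lt_iff_le_not_ge]
      exact hlt
    · exact ⟨(hx.trans hy.symm).le, (hy.trans hx.symm).le⟩
    · exact ⟨(hy.trans hz.symm).le, (hz.trans hy.symm).le⟩
  · rintro h ⟨a, x, y, z, ⟨-, -, -, hxy, hxz, hyz⟩, hax, hxy', hyz'⟩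
    have hy : c.index y = c.index x := le_antisymm hxy'.2 hxy'.1
    have hz : c.index z = c.index x := (le_antisymm hyz'.2 hyz'.1).trans hy
    have h3 : 2 < #{w | c.index w = c.index x} :=
      two_lt_card.2 ⟨x, by simp, y, by simp [hy], z, by simp [hz], hxy, hxz, hyz⟩
    have hpos : 0 < (c.index x : ℕ) :=
      Nat.zero_lt_of_lt (Fin.lt_def.1 (lt_of_le_not_ge hax.1 hax.2))
    rw [card_index_eq] at h3
    have := h _ (c.mem_blocks_tail_iff.2 ⟨_, hpos, rfl⟩)
    omega

end Composition

abbrev TwoQLComposition (n : ℕ) : Type :=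
  {c : Composition n // ∀ b ∈ c.blocks.tail, b = 1 ∨ b = 2}

lemma TwoQLWeakOrd.isWeakOrdering {n : ℕ} (R : TwoQLWeakOrd n) : IsWeakOrdering R.1 :=
  ⟨R.2.1, fun hxy hyz => R.2.2.1 hxy hyz⟩

lemma rankSet_eq_of_isoRel {n : ℕ} {R S : TwoQLWeakOrd n} (h : isoRel n R S) :
    rankSet R.1 = rankSet S.1 :=
  let ⟨φ, hφ⟩ := h
  (rankSet_eq_of_equiv φ hφ).symm

def TwoQLComposition.toTwoQLWeakOrd {n : ℕ} (c : TwoQLComposition n) : TwoQLWeakOrd n :=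
  ⟨c.1.blockRel, c.1.isWeakOrdering_blockRel.total, fun _ _ _ => le_trans,
    c.1.twoQuasilinear_blockRel_iff.2 c.2⟩

theorem card_quot_isoRel (n : ℕ) : Nat.card (Quot (isoRel n)) = Nat.card (TwoQLComposition n) := by
  symm
  refine Nat.card_eq_of_bijective (fun c => Quot.mk _ c.toTwoQLWeakOrd) ⟨?_, ?_⟩
  · intro c c' h
    have hrank := congrArg (Quot.lift (fun R : TwoQLWeakOrd n => rankSet R.1)
      fun _ _ => rankSet_eq_of_isoRel) h
    exact Subtype.ext (Composition.eq_of_rankSet_blockRel_eq hrank)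
  · rintro ⟨R⟩
    have h0 : n = 0 ∨ 0 ∈ rankSet R.1 := n.eq_zero_or_pos.imp_right fun hn =>
      haveI : Nonempty (Fin n) := ⟨⟨0, hn⟩⟩
      zero_mem_rankSet R.isWeakOrdering
    obtain ⟨c, hc⟩ := Composition.exists_rankSet_blockRel_eq (rankSet R.1)
      (fun v hv => by simpa using lt_card_of_mem_rankSet hv) h0
    obtain ⟨φ, hφ⟩ :=
      exists_equiv_of_rankSet_eq R.isWeakOrdering c.isWeakOrdering_blockRel rfl hc.symm
    exact ⟨⟨c, c.twoQuasilinear_blockRel_iff.1 (R.2.2.2.comap φ.injective hφ)⟩,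
      (Quot.sound ⟨φ, hφ⟩).symm⟩

abbrev OneTwoList (m : ℕ) : Type := {l : List ℕ // l.sum = m ∧ ∀ b ∈ l, b = 1 ∨ b = 2}

namespace OneTwoList

instance (m : ℕ) : Finite (OneTwoList m) :=
  Finite.of_injective
    (fun l : OneTwoList m => (⟨l.1, fun hb => by rcases l.2.2 _ hb with h | h <;> omega, l.2.1⟩ :
      Composition m))
    fun _ _ h => Subtype.ext (congrArg Composition.blocks h)

lemma eq_nil_of_sum_eq_zero {l : List ℕ} (hsum : l.sum = 0) (hl : ∀ b ∈ l, b = 1 ∨ b = 2) :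
    l = [] :=
  List.eq_nil_iff_forall_not_mem.2 fun b hb => by
    have := List.sum_eq_zero_iff.1 hsum b hb
    rcases hl b hb with h | h <;> omega

def cons (m : ℕ) : OneTwoList (m + 1) ⊕ OneTwoList m → OneTwoList (m + 2)
  | .inl l => ⟨1 :: l.1, by rw [List.sum_cons, l.2.1]; omega, by simpa using l.2.2⟩
  | .inr l => ⟨2 :: l.1, by rw [List.sum_cons, l.2.1]; omega, by simpa using l.2.2⟩

lemma cons_bijective (m : ℕ) : Function.Bijective (cons m) := by
  constructor
  · rintro (⟨l, hl⟩ | ⟨l, hl⟩) (⟨l', hl'⟩ | ⟨l', hl'⟩) h <;> simp_all [cons]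
  · rintro ⟨_ | ⟨a, l⟩, hsum, hl⟩
    · simp at hsum
    · have hl' : ∀ b ∈ l, b = 1 ∨ b = 2 := fun b hb => hl b (List.mem_cons_of_mem _ hb)
      rw [List.sum_cons] at hsum
      rcases hl a List.mem_cons_self with rfl | rfl
      · exact ⟨.inl ⟨l, by omega, hl'⟩, rfl⟩
      · exact ⟨.inr ⟨l, by omega, hl'⟩, rfl⟩

theorem card : ∀ m, Nat.card (OneTwoList m) = Nat.fib (m + 1)
  | 0 => Nat.card_eq_one_iff_exists.2
      ⟨⟨[], rfl, by simp⟩, fun l => Subtype.ext (eq_nil_of_sum_eq_zero l.2.1 l.2.2)⟩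
  | 1 => Nat.card_eq_one_iff_exists.2 ⟨⟨[1], rfl, by simp⟩, fun ⟨l, hsum, hl⟩ => by
      obtain _ | ⟨a, t⟩ := l
      · simp at hsum
      · rw [List.sum_cons] at hsum
        obtain rfl : a = 1 := by rcases hl a List.mem_cons_self with h | h <;> omega
        rw [Subtype.mk.injEq,
          eq_nil_of_sum_eq_zero (by omega) fun b hb => hl b (List.mem_cons_of_mem _ hb)]⟩
  | m + 2 => by
      rw [← Nat.card_eq_of_bijective _ (cons_bijective m), Nat.card_sum, card m, card (m + 1),
        Nat.fib_add_two (n := m + 1), add_comm]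

end OneTwoList

lemma Nat.sum_range_fib_succ (n : ℕ) : ∑ k ∈ range n, Nat.fib (k + 1) = Nat.fib (n + 2) - 1 := by
  rw [Nat.fib_succ_eq_succ_sum (n + 1), sum_range_succ', Nat.fib_zero, add_zero, Nat.add_sub_cancel]

namespace TwoQLComposition

def ofTail {n : ℕ} : (Σ k : Fin n, OneTwoList k) → TwoQLComposition n
  | ⟨k, l⟩ => ⟨⟨(n - k) :: l.1,
      fun hb => by
        rcases List.mem_cons.1 hb with rfl | hb
        · omega
        · rcases l.2.2 _ hb with rfl | rfl <;> omega,
      by simp only [List.sum_cons, l.2.1]; omega⟩, l.2.2⟩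

lemma blocks_ofTail {n : ℕ} (k : Fin n) (l : OneTwoList k) :
    (ofTail ⟨k, l⟩).1.blocks = (n - k) :: l.1 :=
  rfl

lemma ofTail_bijective {n : ℕ} (hn : 1 ≤ n) : Function.Bijective (ofTail (n := n)) := by
  constructor
  · rintro ⟨k, l⟩ ⟨k', l'⟩ h
    have hb := congrArg (·.1.blocks) h
    simp only [blocks_ofTail, List.cons.injEq] at hb
    obtain rfl : k = k' := Fin.ext (by omega)
    obtain rfl : l = l' := Subtype.ext hb.2
    rfl
  · rintro ⟨⟨_ | ⟨a, t⟩, hpos, hsum⟩, ht⟩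
    · rw [List.sum_nil] at hsum
      omega
    · have ha : 0 < a := hpos List.mem_cons_self
      rw [List.sum_cons] at hsum
      subst hsum
      refine ⟨⟨⟨t.sum, by omega⟩, t, rfl, ht⟩, Subtype.ext (Composition.ext ?_)⟩
      rw [blocks_ofTail, Nat.add_sub_cancel]

theorem card {n : ℕ} (hn : 1 ≤ n) : Nat.card (TwoQLComposition n) = Nat.fib (n + 2) - 1 := by
  rw [← Nat.card_eq_of_bijective _ (ofTail_bijective hn), Nat.card_sigma]
  simp only [OneTwoList.card, Fin.sum_univ_eq_sum_range (fun k => Nat.fib (k + 1)),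
    Nat.sum_range_fib_succ]

end TwoQLComposition

theorem stmt_16 (n : ℕ) (hn : 1 ≤ n) :
    Nat.card (Quot (isoRel n)) = Nat.fib (n + 2) - 1 ∧
      Nat.card {c : Composition n // ∀ b ∈ c.blocks.tail, b = 1 ∨ b = 2}
        = Nat.fib (n + 2) - 1 :=
  ⟨(card_quot_isoRel n).trans (TwoQLComposition.card hn), TwoQLComposition.card hn⟩
end

section
/- Let F : X × X → X be associative and quasitrivial. Then F is commutative if and only if F = max_⪯ for some total ordering ⪯ on X, i.e., F(x,y) is the ⪯-larger of x and y. -/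
theorem stmt_17 {X : Type*} [Nonempty X] (F : X → X → X)
    (hA : Assoc F) (hQ : Quasitrivial F) :
    (∀ x y : X, F x y = F y x) ↔
      ∃ le : X → X → Prop, IsLinearOrder X le ∧
        ∀ x y : X, (le x y ∧ F x y = y) ∨ (¬ le x y ∧ F x y = x) := by
  have hidem : ∀ x, F x x = x := fun x => by rcases hQ x x with h | h <;> exact h
  constructor
  · intro hC
    refine ⟨fun x y => F x y = y, ?_, ?_⟩
    · refine { refl := hidem, trans := ?_, antisymm := ?_, total := ?_ }
      · intro x y z hxy hyz
        have : F x z = F x (F y z) := by rw [hyz]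
        rw [this, ← hA, hxy, hyz]
      · intro x y hxy hyx; rw [← hyx, hC, hxy]
      · intro x y
        rcases hQ x y with h | h
        · right; rw [hC, h]
        · left; exact h
    · intro x y
      by_cases h : F x y = y
      · exact Or.inl ⟨h, h⟩
      · rcases hQ x y with h' | h'
        · exact Or.inr ⟨h, h'⟩
        · exact absurd h' h
  · rintro ⟨le, hL, hF⟩ x y
    rcases hF x y with ⟨hxy, e1⟩ | ⟨hxy, e1⟩ <;>
      rcases hF y x with ⟨hyx, e2⟩ | ⟨hyx, e2⟩
    · rw [e1, e2]; exact hL.antisymm _ _ hyx hxy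
    · rw [e1, e2]
    · rw [e1, e2]
    · rcases hL.total x y with h | h
      · exact absurd h hxy
      · exact absurd h hyx
end

section
/- Let X be a finite set and F : X × X → X be quasitrivial, anticommutative (F(x,y)=F(y,x) implies x=y), and ≤-preserving for some total ordering ≤ on X. Then F = π₁ (first projection) or F = π₂ (second projection). -/
noncomputable abbrev linearOrderOfIsLinearOrder {α : Type*} (r : α → α → Prop)
    [IsLinearOrder α r] : LinearOrder α where
  le := r
  le_refl := refl_of r
  le_trans _ _ _ := trans_of r
  le_antisymm _ _ := antisymm_of r
  le_total := total_of r
  toDecidableLE := Classical.decRel r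

section Order

variable {X : Type*} [LinearOrder X] {z a b : X}

lemma eq_left_of_le_of_lt (hz : z = a ∨ z = b) (hza : z ≤ a) (hab : a < b) : z = a :=
  hz.resolve_right fun h => (h ▸ hza).not_gt hab

lemma eq_right_of_le_of_lt (hz : z = a ∨ z = b) (hbz : b ≤ z) (hab : a < b) : z = b :=
  hz.resolve_left fun h => (h ▸ hbz).not_gt hab

end Order

namespace Quasitrivial

variable {X : Type*} {F : X → X → X} (hQ : Quasitrivial F) {x y z u v : X}
include hQ

lemma apply_self (x : X) : F x x = x :=
  (hQ x x).elim id id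

lemma ne_of_apply_ne_left (h : F x y ≠ x) : x ≠ y := by
  rintro rfl
  exact h (hQ.apply_self x)

variable (hAC : ∀ x y : X, F x y = F y x → x = y)
include hAC

lemma apply_eq_left_iff_swap (hxy : x ≠ y) : F x y = x ↔ F y x = y := by
  constructor
  · intro h
    exact (hQ y x).resolve_right fun h' => hxy (hAC x y (h.trans h'.symm))
  · intro h
    exact (hQ x y).resolve_right fun h' => hxy (hAC x y (h'.trans h.symm))

variable [LinearOrder X] (hmono : ∀ ⦃x x' y y'⦄, x ≤ x' → y ≤ y' → F x y ≤ F x' y')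
include hmono

lemma apply_eq_left_iff_of_lt_of_le (hxy : x < y) (hyz : y ≤ z) :
    F x y = x ↔ F x z = x := by
  have hxz := hxy.trans_le hyz
  constructor
  · intro hx
    by_contra hz
    have hzx : F z x = x :=
      (hQ z x).resolve_left fun h => hz ((hQ.apply_eq_left_iff_swap hAC hxz.ne').1 h)
    have hyx : F y x = x :=
      eq_left_of_le_of_lt (hQ y x).symm ((hmono hyz le_rfl).trans_eq hzx) hxy
    exact hxy.ne (hyx.symm.trans ((hQ.apply_eq_left_iff_swap hAC hxy.ne).1 hx))
  · intro hx
    exact eq_left_of_le_of_lt (hQ x y) ((hmono le_rfl hyz).trans_eq hx) hxy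

lemma apply_eq_left_iff_of_le_of_lt (hxy : x ≤ y) (hyz : y < z) :
    F y z = y ↔ F x z = x := by
  have hxz := hxy.trans_lt hyz
  constructor
  · intro hy
    by_contra hx
    have hxz' : F x z = z := (hQ x z).resolve_left hx
    have hyz' : F y z = z :=
      eq_right_of_le_of_lt (hQ y z) (hxz'.symm.trans_le (hmono hxy le_rfl)) hyz
    exact hyz.ne (hy.symm.trans hyz')
  · intro hx
    have hzx : F z x = z := (hQ.apply_eq_left_iff_swap hAC hxz.ne).1 hx
    have hzy : F z y = z :=
      eq_right_of_le_of_lt (hQ z y).symm (hzx.symm.trans_le (hmono le_rfl hxy)) hyz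
    exact (hQ.apply_eq_left_iff_swap hAC hyz.ne).2 hzy

lemma apply_eq_left_iff_of_le_of_le (hux : u ≤ x) (hxy : x < y) (hyv : y ≤ v) :
    F x y = x ↔ F u v = u :=
  (hQ.apply_eq_left_iff_of_lt_of_le hAC hmono hxy hyv).trans
    (hQ.apply_eq_left_iff_of_le_of_lt hAC hmono hux (hxy.trans_le hyv))

lemma apply_eq_left_iff_of_lt (hxy : x < y) (huv : u < v) : F x y = x ↔ F u v = u :=
  (hQ.apply_eq_left_iff_of_le_of_le hAC hmono (min_le_left x u) hxy (le_max_left y v)).trans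
    (hQ.apply_eq_left_iff_of_le_of_le hAC hmono (min_le_right x u) huv (le_max_right y v)).symm

lemma apply_eq_left_iff_of_ne_of_lt (hxy : x ≠ y) (huv : u < v) : F x y = x ↔ F u v = u := by
  rcases hxy.lt_or_gt with hxy | hyx
  · exact hQ.apply_eq_left_iff_of_lt hAC hmono hxy huv
  · exact (hQ.apply_eq_left_iff_swap hAC hyx.ne').trans
      (hQ.apply_eq_left_iff_of_lt hAC hmono hyx huv)

lemma apply_eq_left_iff_of_ne (hxy : x ≠ y) (huv : u ≠ v) : F x y = x ↔ F u v = u := by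
  rcases huv.lt_or_gt with huv | hvu
  · exact hQ.apply_eq_left_iff_of_ne_of_lt hAC hmono hxy huv
  · exact (hQ.apply_eq_left_iff_of_ne_of_lt hAC hmono hxy hvu).trans
      (hQ.apply_eq_left_iff_swap hAC hvu.ne').symm

end Quasitrivial

theorem stmt_18_general {X : Type*} (F : X → X → X)
    (hQ : Quasitrivial F)
    (hAC : ∀ x y : X, F x y = F y x → x = y)
    (hOP : ∃ le : X → X → Prop, IsLinearOrder X le ∧
      ∀ x x' y y' : X, le x x' → le y y' → le (F x y) (F x' y')) :
    (∀ x y : X, F x y = x) ∨ (∀ x y : X, F x y = y) := by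
  obtain ⟨le, hlin, hmono⟩ := hOP
  let := linearOrderOfIsLinearOrder le
  refine or_iff_not_imp_left.2 fun hπ₁ => ?_
  push Not at hπ₁
  obtain ⟨p, q, hpq⟩ := hπ₁
  intro x y
  rcases eq_or_ne x y with rfl | hxy
  · exact hQ.apply_self x
  · exact (hQ x y).resolve_left fun hx =>
      hpq ((hQ.apply_eq_left_iff_of_ne hAC hmono hxy (hQ.ne_of_apply_ne_left hpq)).1 hx)

theorem stmt_18 {X : Type*} [Finite X] (F : X → X → X)
    (hQ : Quasitrivial F)
    (hAC : ∀ x y : X, F x y = F y x → x = y)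
    (hOP : ∃ le : X → X → Prop, IsLinearOrder X le ∧
      ∀ x x' y y' : X, le x x' → le y y' → le (F x y) (F x' y')) :
    (∀ x y : X, F x y = x) ∨ (∀ x y : X, F x y = y) :=
  stmt_18_general F hQ hAC hOP
end

section
/- A weak ordering ≾ on a set X is quasilinear (there are no pairwise distinct a,b,c with a ≺ b ∼ c) if and only if ≾ is single-plateaued for every total ordering ≤ on X that extends ≾. -/
/-- A weak ordering is quasilinear if there are no pairwise distinct `a,b,c`
with `a ≺ b ∼ c`. -/
def Quasilinear {X : Type*} (R : X → X → Prop) : Prop :=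
  ¬ ∃ a b c : X, (a ≠ b ∧ a ≠ c ∧ b ≠ c) ∧ SLT R a b ∧ SIM R b c

section

variable {X : Type*} {R : X → X → Prop}

theorem SLT.ne {x y : X} (h : SLT R x y) : x ≠ y := by
  rintro rfl
  exact h.2 h.1

/-- `x ≺ y`, or `x ∼ y` and `t x y`. -/
def lexRefine (R t : X → X → Prop) (x y : X) : Prop := R x y ∧ (R y x → t x y)

theorem lexRefine_of_slt (t : X → X → Prop) {x y : X} (h : SLT R x y) : lexRefine R t x y :=
  ⟨h.1, fun hyx => absurd hyx h.2⟩

theorem isLinearOrder_lexRefine (htot : ∀ x y : X, R x y ∨ R y x) (htrans : Transitive R)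
    (t : X → X → Prop) [IsLinearOrder X t] : IsLinearOrder X (lexRefine R t) where
  refl x := ⟨(htot x x).elim id id, fun _ => refl x⟩
  trans x y z hxy hyz :=
    ⟨htrans hxy.1 hyz.1, fun hzx =>
      _root_.trans (hxy.2 (htrans hyz.1 hzx)) (hyz.2 (htrans hzx hxy.1))⟩
  antisymm x y hxy hyx := antisymm (hxy.2 hyx.1) (hyx.2 hxy.1)
  total x y := by
    by_cases hxy : R x y <;> by_cases hyx : R y x
    · exact (total_of t x y).imp (fun h => ⟨hxy, fun _ => h⟩) (fun h => ⟨hyx, fun _ => h⟩)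
    · exact Or.inl ⟨hxy, fun h => absurd h hyx⟩
    · exact Or.inr ⟨hyx, fun h => absurd h hxy⟩
    · exact ((htot x y).elim hxy hyx).elim

theorem exists_isLinearOrder_rel (b c : X) : ∃ t : X → X → Prop, IsLinearOrder X t ∧ t b c := by
  let r : X → X → Prop := fun x y => x = y ∨ x = b ∧ y = c
  have : IsPartialOrder X r :=
    { refl := fun x => Or.inl rfl
      trans := by rintro x y z (rfl | ⟨rfl, rfl⟩) (rfl | ⟨rfl, rfl⟩) <;> simp [r]
      antisymm := by rintro x y (rfl | ⟨rfl, rfl⟩) (h | ⟨rfl, -⟩) <;> first | rfl | exact h.symm }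
  obtain ⟨t, ht, hrt⟩ := extend_partialOrder r
  exact ⟨t, ht, hrt b c (Or.inr ⟨rfl, rfl⟩)⟩

theorem singlePlateaued_of_quasilinear (htot : ∀ x y : X, R x y ∨ R y x) (hq : Quasilinear R)
    {le : X → X → Prop} [Std.Antisymm le] (hext : ∀ a b : X, SLT R a b → le a b) :
    SinglePlateaued R le := by
  rintro a b c ⟨hab, hab_ne⟩ ⟨hbc, hbc_ne⟩
  have hac_ne : a ≠ c := by
    rintro rfl
    exact hab_ne (antisymm hab hbc)
  have hRbc : R b c := by
    by_contra hRbc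
    exact hbc_ne (antisymm hbc (hext c b ⟨(htot b c).resolve_left hRbc, hRbc⟩))
  by_cases hRcb : R c b
  swap
  · exact Or.inr (Or.inl ⟨hRbc, hRcb⟩)
  by_cases hRab : R a b
  swap
  · exact Or.inl ⟨(htot a b).resolve_left hRab, hRab⟩
  by_cases hRba : R b a
  · exact Or.inr (Or.inr ⟨⟨hRab, hRba⟩, hRbc, hRcb⟩)
  · exact absurd ⟨a, b, c, ⟨hab_ne, hac_ne, hbc_ne⟩, ⟨hRab, hRba⟩, hRbc, hRcb⟩ hq

theorem quasilinear_of_forall_singlePlateaued (htot : ∀ x y : X, R x y ∨ R y x)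
    (htrans : Transitive R)
    (h : ∀ le : X → X → Prop, IsLinearOrder X le →
      (∀ a b : X, SLT R a b → le a b ∧ a ≠ b) → SinglePlateaued R le) :
    Quasilinear R := by
  rintro ⟨a, b, c, ⟨hab, -, hbc⟩, hslt, hsim⟩
  obtain ⟨t, ht, htbc⟩ := exists_isLinearOrder_rel b c
  have hplat := h (lexRefine R t) (isLinearOrder_lexRefine htot htrans t)
    (fun x y hxy => ⟨lexRefine_of_slt t hxy, hxy.ne⟩) a b c
    ⟨lexRefine_of_slt t hslt, hab⟩ ⟨⟨hsim.1, fun _ => htbc⟩, hbc⟩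
  rcases hplat with hba | hbc' | ⟨hab', -⟩
  · exact hba.2 hslt.1
  · exact hbc'.2 hsim.2
  · exact hslt.2 hab'.2

end

theorem stmt_19 {X : Type*} (R : X → X → Prop)
    (htot : ∀ x y : X, R x y ∨ R y x) (htrans : Transitive R) :
    Quasilinear R ↔
      ∀ le : X → X → Prop, IsLinearOrder X le →
        (∀ a b : X, SLT R a b → le a b ∧ a ≠ b) → SinglePlateaued R le :=
  ⟨fun hq _ _ hext => singlePlateaued_of_quasilinear htot hq fun a b h => (hext a b h).1,
    quasilinear_of_forall_singlePlateaued htot htrans⟩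
end
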